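/- arXiv:2205.12826 — 4 statements merged into one kernel-verified Lean document; each statement's English description precedes it below -/
import Mathlib

section
/- For every r, t ∈ ℕ, there exists a constant C = C(r,t) > 0 and n₀ ∈ ℕ such that for every n ≥ n₀, every r-colouring of the edges of the complete graph K_n in which every one of the r colours appears on at least C·n^{2−1/t} edges contains an (r,t)-unavoidable graph, i.e. contains as an edge-coloured subgraph a member of the family 𝓕ʳₜ. -/
/-- A vertex- and edge-coloured complete graph on `Fin v` with `r` colours is
modelled as a function `χ : Sym2 (Fin v) → Fin r`, where `χ s(a, a)` is the
colour of the vertex `a` and `χ s(a, b)` (for `a ≠ b`) the colour of the edge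
`ab`. It is `r`-minimal if all `r` colours are present and no proper induced
coloured subgraph contains all `r` colours. -/
def IsRMinimal (r v : ℕ) (χ : Sym2 (Fin v) → Fin r) : Prop :=
  (∀ k : Fin r, ∃ a b : Fin v, χ s(a, b) = k) ∧
    ∀ S : Finset (Fin v), S ≠ Finset.univ →
      ∃ k : Fin r, ∀ a ∈ S, ∀ b ∈ S, χ s(a, b) ≠ k

/-- `ContainsUnavoidable r t n c` : the `r`-edge-coloured complete graph on
`Fin n` with colouring `c` contains a member of `𝓕ʳₜ`, i.e. an
`(r,t)`-unavoidable graph: there is an `r`-minimal graph `χ` on `Fin v` and an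
injection of its `t`-blowup (on vertex set `Fin v × Fin t`) into `Fin n` on
which `c` agrees with the blowup colouring (edges inside the clique replacing
a vertex `a` get the vertex colour `χ s(a, a)`, and edges between the cliques
replacing `a ≠ b` get the edge colour `χ s(a, b)`). -/
def ContainsUnavoidable (r t n : ℕ) (c : Sym2 (Fin n) → Fin r) : Prop :=
  ∃ (v : ℕ) (χ : Sym2 (Fin v) → Fin r) (e : Fin v × Fin t → Fin n),
    IsRMinimal r v χ ∧ Function.Injective e ∧
      ∀ a b : Fin v × Fin t, a ≠ b → c s(e a, e b) = χ s(a.1, b.1)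

/-!
Dependent random choice gives, in every colour class `k`, a large set `U k` all of whose `t`-sets
have many common `k`-neighbours. Ramsey's theorem shrinks the `U k` to homes on which the colouring
is constant inside each home and between any two homes. For a `t`-set `T` of the home of `k`, a
large class of its common `k`-neighbours outside the homes consists of twins: vertices with the
same colours towards every home. A compatibility argument chooses the `t`-sets `T k` so that the
twins of `T b` see each `T a`, `a ≠ b`, in a single colour, and Ramsey's theorem then extracts
`t`-sets `Y k` from the twin classes. The `2r` blocks `T k`, `Y k` span a `t`-blowup in which the
pair `T k`, `Y k` has colour `k`, so every colour occurs; a minimal sub-pattern is `r`-minimal.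
-/

open Finset Function

section Pigeonhole

variable {α β δ : Type*}

theorem exists_le_card_filter_eq [Fintype β] [Nonempty β] [DecidableEq β] (s : Finset α)
    (f : α → β) {m : ℕ} (h : Fintype.card β * m ≤ #s) : ∃ b, m ≤ #{x ∈ s | f x = b} := by
  obtain ⟨b, -, hb⟩ := exists_le_card_fiber_of_mul_le_card_of_maps_to
    (fun x _ => mem_univ (f x)) univ_nonempty (by simpa using h)
  exact ⟨b, hb⟩

theorem exists_subset_forall_eq_of_pow_mul_le [Fintype β] [Nonempty β]
    (J : Finset δ) (f : δ → α → β) (s : Finset α) {m : ℕ}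
    (h : Fintype.card β ^ #J * m ≤ #s) :
    ∃ s' ⊆ s, m ≤ #s' ∧ ∀ j ∈ J, ∀ x ∈ s', ∀ y ∈ s', f j x = f j y := by
  classical
  obtain ⟨b, hb⟩ := exists_le_card_filter_eq s (fun x (j : J) => f j x) (by simpa using h)
  refine ⟨_, filter_subset _ _, hb, fun j hj x hx y hy => ?_⟩
  rw [mem_filter] at hx hy
  exact (congrFun hx.2 ⟨j, hj⟩).trans (congrFun hy.2 ⟨j, hj⟩).symm

theorem exists_subset_forall_not_subset (A : Finset α) (𝒴 : Finset (Finset α))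
    (h𝒴 : ∀ T ∈ 𝒴, T.Nonempty) : ∃ U ⊆ A, #A ≤ #U + #𝒴 ∧ ∀ T ∈ 𝒴, ¬ T ⊆ U := by
  classical
  induction 𝒴 using Finset.induction_on with
  | empty => exact ⟨A, subset_rfl, by simp, by simp⟩
  | insert T 𝒴 hT ih =>
    obtain ⟨U, hUA, hU, hU𝒴⟩ := ih fun T' hT' => h𝒴 T' (mem_insert_of_mem hT')
    obtain ⟨y, hy⟩ := h𝒴 T (mem_insert_self T 𝒴)
    refine ⟨U.erase y, (erase_subset y U).trans hUA, ?_, ?_⟩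
    · rw [card_insert_of_notMem hT]
      have := pred_card_le_card_erase (s := U) (a := y)
      omega
    · intro T' hT' hsub
      rcases mem_insert.1 hT' with rfl | hT'
      · exact notMem_erase y U (hsub hy)
      · exact hU𝒴 T' hT' (hsub.trans (erase_subset y U))

theorem exists_pairwise_disjoint_subsets [Fintype δ] (W : δ → Finset α) {m : ℕ}
    (hW : ∀ i, Fintype.card δ * m ≤ #(W i)) :
    ∃ Z : δ → Finset α, (∀ i, Z i ⊆ W i ∧ #(Z i) = m) ∧ Pairwise (Disjoint on Z) := by
  classical
  suffices ∀ I : Finset δ, ∃ Z : δ → Finset α, (∀ i ∈ I, Z i ⊆ W i ∧ #(Z i) = m) ∧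
      ∀ i ∈ I, ∀ j ∈ I, i ≠ j → Disjoint (Z i) (Z j) by
    obtain ⟨Z, hZ, hdisj⟩ := this univ
    exact ⟨Z, fun i => hZ i (mem_univ i), fun i j hij => hdisj i (mem_univ i) j (mem_univ j) hij⟩
  intro I
  induction I using Finset.induction_on with
  | empty => exact ⟨fun _ => ∅, by simp, by simp⟩
  | insert a I ha ih =>
    obtain ⟨Z, hZ, hdisj⟩ := ih
    have hused : #(I.biUnion Z) ≤ #I * m :=
      card_biUnion_le_card_mul I Z m fun i hi => (hZ i hi).2.le
    have hI : #I * m + m ≤ #(W a) := by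
      have := card_le_univ (insert a I)
      have := hW a
      rw [card_insert_of_notMem ha] at *
      nlinarith
    obtain ⟨Za, hZa, hZacard⟩ := exists_subset_card_eq (s := W a \ I.biUnion Z) (n := m) (by
      have := card_le_card_sdiff_add_card (s := W a) (t := I.biUnion Z)
      omega)
    have hZa_disj : ∀ i ∈ I, Disjoint Za (Z i) := fun i hi =>
      disjoint_of_subset_left hZa (disjoint_sdiff_self_left.mono_right (subset_biUnion_of_mem Z hi))
    have hupd : ∀ i ∈ I, update Z a Za i = Z i := fun i hi =>
      update_of_ne (ne_of_mem_of_not_mem hi ha) _ _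
    refine ⟨update Z a Za, fun i hi => ?_, fun i hi j hj hij => ?_⟩
    · rcases mem_insert.1 hi with rfl | hi'
      · simpa using ⟨hZa.trans sdiff_subset, hZacard⟩
      · simpa [hupd i hi'] using hZ i hi'
    · rcases mem_insert.1 hi with rfl | hi' <;> rcases mem_insert.1 hj with rfl | hj'
      · exact absurd rfl hij
      · simpa [hupd j hj'] using hZa_disj j hj'
      · simpa [hupd i hi'] using (hZa_disj i hi').symm
      · simpa [hupd i hi', hupd j hj'] using hdisj i hi' j hj' hij

end Pigeonhole

section Blowup

variable {α β ι ι' : Type*} {t : ℕ}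

/-- `c` is constant between any two of the blocks `e (x, ·)` and inside each of them. -/
def IsBlockUniform (c : Sym2 α → β) (e : ι × Fin t → α) : Prop :=
  ∀ x y : ι, ∃ k, ∀ j j', (x, j) ≠ (y, j') → c s(e (x, j), e (y, j')) = k

theorem IsBlockUniform.reindex {m : ℕ} {c : Sym2 α → β} {e : ι × Fin m → α}
    (h : IsBlockUniform c e) (σ : ι → Fin t → Fin m) (hσ : ∀ x, Injective (σ x)) :
    IsBlockUniform c fun p => e (p.1, σ p.1 p.2) := fun x y => by
  obtain ⟨k, hk⟩ := h x y
  refine ⟨k, fun j j' hne => hk _ _ fun h => hne ?_⟩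
  simp only [Prod.mk.injEq] at h ⊢
  obtain ⟨rfl, h⟩ := h
  exact ⟨rfl, hσ x h⟩

theorem injective_of_pairwise_disjoint {m : ℕ} {Z : ι → Finset α}
    (hZ : Pairwise (Disjoint on Z)) {e : ι × Fin m → α} (he : ∀ p, e p ∈ Z p.1)
    (hinj : ∀ k, Injective fun j => e (k, j)) : Injective e := by
  rintro ⟨x, j⟩ ⟨y, j'⟩ h
  obtain rfl : x = y := by
    by_contra hxy
    exact disjoint_left.1 (hZ hxy) (he (x, j)) (h ▸ he (y, j'))
  rw [hinj x h]

def blockSum (e₁ : ι × Fin t → α) (e₂ : ι' × Fin t → α) : (ι ⊕ ι') × Fin t → α :=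
  Sum.elim e₁ e₂ ∘ Equiv.sumProdDistrib ι ι' (Fin t)

theorem injective_blockSum {e₁ : ι × Fin t → α} {e₂ : ι' × Fin t → α} (h₁ : Injective e₁)
    (h₂ : Injective e₂) (h₁₂ : ∀ p q, e₁ p ≠ e₂ q) : Injective (blockSum e₁ e₂) :=
  (h₁.sumElim h₂ h₁₂).comp (Equiv.injective _)

theorem IsBlockUniform.blockSum {c : Sym2 α → β} {e₁ : ι × Fin t → α} {e₂ : ι' × Fin t → α}
    (h₁ : IsBlockUniform c e₁) (h₂ : IsBlockUniform c e₂)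
    (h₁₂ : ∀ x y, ∃ k, ∀ j j', c s(e₁ (x, j), e₂ (y, j')) = k) :
    IsBlockUniform c (blockSum e₁ e₂) := by
  rintro (x | x) (y | y)
  · obtain ⟨k, hk⟩ := h₁ x y
    exact ⟨k, fun j j' hne => hk j j' fun h => hne (by simp_all)⟩
  · obtain ⟨k, hk⟩ := h₁₂ x y
    exact ⟨k, fun j j' _ => hk j j'⟩
  · obtain ⟨k, hk⟩ := h₁₂ y x
    exact ⟨k, fun j j' _ => Sym2.eq_swap.symm ▸ hk j' j⟩
  · obtain ⟨k, hk⟩ := h₂ x y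
    exact ⟨k, fun j j' hne => hk j j' fun h => hne (by simp_all)⟩

theorem exists_isRMinimal_comp_map {r : ℕ} [Fintype ι] (χ : Sym2 ι → Fin r)
    (hχ : ∀ k, ∃ a b, χ s(a, b) = k) :
    ∃ (v : ℕ) (σ : Fin v ↪ ι), IsRMinimal r v (χ ∘ Sym2.map σ) := by
  classical
  set P : Finset ι → Prop := fun S => ∀ k, ∃ a ∈ S, ∃ b ∈ S, χ s(a, b) = k
  obtain ⟨S, hS, hmin⟩ := exists_min_image {S | P S} card
    ⟨univ, mem_filter.2 ⟨mem_univ _, fun k => by simpa using hχ k⟩⟩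
  set σ : Fin #S ↪ ι := S.equivFin.symm.toEmbedding.trans (Embedding.subtype _)
  refine ⟨#S, σ, fun k => ?_, fun S' hS' => ?_⟩
  · obtain ⟨a, ha, b, hb, hab⟩ := (mem_filter.1 hS).2 k
    exact ⟨S.equivFin ⟨a, ha⟩, S.equivFin ⟨b, hb⟩, by simpa [σ] using hab⟩
  · have hlt : #(S'.map σ) < #S := by
      rw [card_map]
      simpa using (card_lt_iff_ne_univ S').2 hS'
    have hP : ¬ P (S'.map σ) := fun hP =>
      (hmin _ (mem_filter.2 ⟨mem_univ _, hP⟩)).not_gt hlt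
    simp only [P, not_forall, not_exists, not_and] at hP
    obtain ⟨k, hk⟩ := hP
    exact ⟨k, fun a ha b hb => hk _ (mem_map_of_mem σ ha) _ (mem_map_of_mem σ hb)⟩

theorem containsUnavoidable_zero (r n : ℕ) (c : Sym2 (Fin n) → Fin r) :
    ContainsUnavoidable r 0 n c := by
  obtain ⟨v, σ, hmin⟩ := exists_isRMinimal_comp_map (Sym2.lift ⟨min, min_comm⟩)
    fun k => ⟨k, k, by simp⟩
  exact ⟨v, _, fun p => p.2.elim0, hmin, fun p => p.2.elim0, fun p => p.2.elim0⟩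

theorem containsUnavoidable_of_isBlockUniform {r n : ℕ} [Fintype ι] (ht : 0 < t)
    {c : Sym2 (Fin n) → Fin r} {e : ι × Fin t → Fin n} (he : Injective e)
    (hu : IsBlockUniform c e) (hall : ∀ k, ∃ a b, a ≠ b ∧ c s(e a, e b) = k) :
    ContainsUnavoidable r t n c := by
  choose χ hχ using hu
  have hsymm : ∀ x y, χ x y = χ y x := fun x y => by
    by_cases hxy : x = y
    · rw [hxy]
    · rw [← hχ x y ⟨0, ht⟩ ⟨0, ht⟩ (by simp [hxy]),
        ← hχ y x ⟨0, ht⟩ ⟨0, ht⟩ (by simp [Ne.symm hxy]), Sym2.eq_swap]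
  obtain ⟨v, σ, hmin⟩ := exists_isRMinimal_comp_map (Sym2.lift ⟨χ, hsymm⟩) fun k => by
    obtain ⟨a, b, hab, h⟩ := hall k
    exact ⟨a.1, b.1, by simpa [← hχ a.1 b.1 a.2 b.2 hab] using h⟩
  refine ⟨v, _, fun p => e (σ p.1, p.2), hmin, fun p q h => ?_, fun a b hab => ?_⟩
  · simpa [Prod.ext_iff] using he h
  · simpa using hχ _ _ a.2 b.2 fun h => hab (by simpa [Prod.ext_iff] using h)

end Blowup

section Ramsey

variable {α β : Type*} [LinearOrder α] [Fintype β]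

theorem exists_subset_colour_eq_of_lt (f : α → α → β) (L : ℕ) (V : Finset α)
    (hV : (Fintype.card β + 1) ^ L ≤ #V) :
    ∃ S ⊆ V, #S = L ∧ ∃ χ : α → β, ∀ p ∈ S, ∀ q ∈ S, p < q → f p q = χ p := by
  classical
  induction L generalizing V with
  | zero => exact ⟨∅, empty_subset V, rfl, fun p => f p p, by simp⟩
  | succ L ih =>
    have hP : 0 < (Fintype.card β + 1) ^ L := pow_pos (Nat.succ_pos _) L
    rw [pow_succ, mul_add, mul_one, mul_comm] at hV
    have hne : V.Nonempty := card_pos.1 (by omega)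
    set x := V.min' hne
    have : Nonempty β := ⟨f x x⟩
    have hcard : Fintype.card β * (Fintype.card β + 1) ^ L ≤ #(V.erase x) := by
      rw [card_erase_of_mem (min'_mem V hne)]
      omega
    obtain ⟨k, hk⟩ := exists_le_card_filter_eq (V.erase x) (f x) hcard
    obtain ⟨S, hSF, hS, χ, hχ⟩ := ih _ hk
    have hSV : S ⊆ V.erase x := hSF.trans (filter_subset _ _)
    have hxS : x ∉ S := fun h => notMem_erase x V (hSV h)
    have hSxV : insert x S ⊆ V := insert_subset (min'_mem V hne) (hSV.trans (erase_subset x V))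
    refine ⟨insert x S, hSxV, by rw [card_insert_of_notMem hxS, hS], update χ x k,
      fun p hp q hq hpq => ?_⟩
    have hq : q ∈ S := (mem_insert.1 hq).resolve_left fun h =>
      (min'_le V p (hSxV hp)).not_gt (hpq.trans_eq h)
    rcases mem_insert.1 hp with rfl | hp
    · simpa using (mem_filter.1 (hSF hq)).2
    · rw [update_of_ne (ne_of_mem_of_not_mem hp hxS)]
      exact hχ p hp q hq hpq

theorem exists_monochromatic_subset [Nonempty β] (f : α → α → β) (m : ℕ) (V : Finset α)
    (hV : (Fintype.card β + 1) ^ (Fintype.card β * m) ≤ #V) :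
    ∃ k, ∃ W ⊆ V, m ≤ #W ∧ ∀ p ∈ W, ∀ q ∈ W, p < q → f p q = k := by
  classical
  obtain ⟨S, hSV, hS, χ, hχ⟩ := exists_subset_colour_eq_of_lt f _ V hV
  obtain ⟨k, hk⟩ := exists_le_card_filter_eq S χ hS.ge
  refine ⟨k, _, (filter_subset _ _).trans hSV, hk, fun p hp q hq hpq => ?_⟩
  rw [mem_filter] at hp hq
  exact (hχ p hp.1 q hq.1 hpq).trans hp.2

theorem exists_strictMono_forall_mem {P : Type*} [LinearOrder P] [Fintype P] {W : Finset α}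
    (h : Fintype.card P ≤ #W) : ∃ ψ : P → α, StrictMono ψ ∧ ∀ p, ψ p ∈ W :=
  ⟨fun p => W.orderEmbOfFin rfl (Fin.castLE h ((Fintype.orderIsoFinOfCardEq P rfl).symm p)),
    (W.orderEmbOfFin rfl).strictMono.comp
      ((Fin.strictMono_castLE h).comp (Fintype.orderIsoFinOfCardEq P rfl).symm.strictMono),
    fun _ => W.orderEmbOfFin_mem rfl _⟩

end Ramsey

theorem exists_isBlockUniform (β : Type*) [Fintype β] [Nonempty β] (r m : ℕ) :
    ∃ g : ℕ, ∀ {α : Type*} (c : Sym2 α → β) (S : Fin r → Finset α), (∀ k, g ≤ #(S k)) →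
      ∃ e : Fin r × Fin m → α, (∀ p, e p ∈ S p.1) ∧ (∀ k, Injective fun j => e (k, j)) ∧
        IsBlockUniform c e := by
  classical
  -- Ramsey on positions `p < q`, coloured by the matrix of colours between the `p`-th and `q`-th
  -- points of all the `S k`; the blocks are consecutive segments of a monochromatic set
  set b := Fintype.card (Fin r × Fin r → β)
  refine ⟨(b + 1) ^ (b * (r * m)), fun c S hS => ?_⟩
  have hφ : ∀ k, ∃ φ : Fin ((b + 1) ^ (b * (r * m))) ↪ _, ∀ p, φ p ∈ S k := fun k =>
    let ⟨φ⟩ := Function.Embedding.nonempty_of_card_le (β := S k) (by simpa using hS k)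
    ⟨φ.trans (Function.Embedding.subtype _), fun p => (φ p).2⟩
  choose φ hφ using hφ
  obtain ⟨κ, W, -, hW, hκ⟩ := exists_monochromatic_subset
    (fun p q (kk : Fin r × Fin r) => c s(φ kk.1 p, φ kk.2 q)) (r * m) univ (by simp [b])
  obtain ⟨ψ, hψ, hψW⟩ := exists_strictMono_forall_mem (P := Lex (Fin r × Fin m)) (W := W)
    (by simpa using hW)
  have hpair : ∀ p q : Fin r × Fin m, toLex p < toLex q →
      c s(φ p.1 (ψ (toLex p)), φ q.1 (ψ (toLex q))) = κ (p.1, q.1) := fun p q hpq =>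
    congrFun (hκ _ (hψW _) _ (hψW _) (hψ hpq)) (p.1, q.1)
  refine ⟨fun p => φ p.1 (ψ (toLex p)), fun p => hφ _ _, fun k j j' h => ?_,
    fun x y => ⟨if x ≤ y then κ (x, y) else κ (y, x), fun j j' hne => ?_⟩⟩
  · simpa using hψ.injective ((φ k).injective h)
  · rcases lt_trichotomy (toLex (x, j)) (toLex (y, j')) with h | h | h
    · rw [if_pos (Prod.Lex.toLex_lt_toLex'.1 h).1]
      exact hpair _ _ h
    · exact absurd (toLex.injective h) hne
    · rw [Sym2.eq_swap]
      refine (hpair _ _ h).trans ?_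
      split_ifs with hxy
      · rw [le_antisymm hxy (Prod.Lex.toLex_lt_toLex'.1 h).1]
      · rfl

theorem exists_compatible_subsets (β : Type*) [Fintype β] [Nonempty β] (t s : ℕ) :
    ∃ N : ℕ, ∀ {ι γ : Type*} (I : Finset ι) (B : ι → Finset γ) (u : ι → ι → Finset γ → γ → β),
      #I ≤ s → (∀ i ∈ I, N ≤ #(B i)) →
      ∃ T : ι → Finset γ, (∀ i ∈ I, T i ⊆ B i ∧ #(T i) = t) ∧
        ∀ i ∈ I, ∀ j ∈ I, i ≠ j → ∀ x ∈ T j, ∀ y ∈ T j, u i j (T i) x = u i j (T i) y := by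
  classical
  induction s with
  | zero =>
    refine ⟨0, fun I B u hI _ => ⟨fun _ => ∅, ?_, ?_⟩⟩ <;>
      simp [card_eq_zero.1 (Nat.le_zero.1 hI)]
  | succ s ih =>
    obtain ⟨N₀, hN₀⟩ := ih
    set b := Fintype.card β
    set M := b * N₀
    refine ⟨M + b ^ (s * 2 ^ (s * M)) * t, fun {ι γ} I B u hI hB => ?_⟩
    rcases I.eq_empty_or_nonempty with rfl | ⟨a, ha⟩
    · exact hN₀ ∅ B u (by simp) (by simp)
    set I' := I.erase a
    have hI' : #I' ≤ s := by rw [card_erase_of_mem ha]; omega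
    choose! B' hB'B hB' using fun i (hi : i ∈ I') =>
      exists_subset_card_eq (s := B i) (n := M) (by have := hB i (mem_of_mem_erase hi); omega)
    -- the home of `a` is the largest one, so `Ta` can be chosen uniform for every candidate
    -- `T ⊆ B' i` of every other item `i` at once
    set J := I' ×ˢ (I'.biUnion B').powerset
    have hJ : #J ≤ s * 2 ^ (s * M) := by
      have : #(I'.biUnion B') ≤ s * M :=
        (card_biUnion_le_card_mul _ _ M fun i hi => (hB' i hi).le).trans
          (Nat.mul_le_mul_right M hI')
      rw [card_product, card_powerset]
      exact Nat.mul_le_mul hI' (Nat.pow_le_pow_right two_pos this)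
    obtain ⟨K, hKB, hK, hKu⟩ := exists_subset_forall_eq_of_pow_mul_le J
      (fun p x => u p.1 a p.2 x) (B a) (m := t) (by
        calc b ^ #J * t ≤ b ^ (s * 2 ^ (s * M)) * t :=
              Nat.mul_le_mul_right t (Nat.pow_le_pow_right Fintype.card_pos hJ)
          _ ≤ #(B a) := by have := hB a ha; omega)
    obtain ⟨Ta, hTaK, hTa⟩ := exists_subset_card_eq hK
    choose! v hv using fun i (hi : i ∈ I') =>
      exists_le_card_filter_eq (B' i) (u a i Ta) (m := N₀) (hB' i hi).ge
    obtain ⟨T, hTB, hTu⟩ := hN₀ I' (fun i => {x ∈ B' i | u a i Ta x = v i}) u hI' hv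
    have hupd : ∀ i ∈ I', update T a Ta i = T i := fun i hi =>
      update_of_ne (ne_of_mem_erase hi) _ _
    refine ⟨update T a Ta, fun i hi => ?_, fun i hi j hj hij x hx y hy => ?_⟩
    · by_cases hia : i = a
      · subst hia
        simpa using ⟨hTaK.trans hKB, hTa⟩
      · have hi' : i ∈ I' := mem_erase.2 ⟨hia, hi⟩
        rw [hupd i hi']
        exact ⟨(hTB i hi').1.trans ((filter_subset _ _).trans (hB'B i hi')), (hTB i hi').2⟩
    · by_cases hia : i = a
      · subst hia
        have hj' : j ∈ I' := mem_erase.2 ⟨Ne.symm hij, hj⟩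
        rw [hupd j hj'] at hx hy
        simp only [update_self]
        have hx := (mem_filter.1 ((hTB j hj').1 hx)).2
        have hy := (mem_filter.1 ((hTB j hj').1 hy)).2
        rw [hx, hy]
      · have hi' : i ∈ I' := mem_erase.2 ⟨hia, hi⟩
        rw [hupd i hi']
        by_cases hja : j = a
        · subst hja
          simp only [update_self] at hx hy
          refine hKu (i, T i) (mem_product.2 ⟨hi', mem_powerset.2 ?_⟩) x (hTaK hx) y (hTaK hy)
          exact ((hTB i hi').1.trans (filter_subset _ _)).trans (subset_biUnion_of_mem B' hi')
        · have hj' : j ∈ I' := mem_erase.2 ⟨hja, hj⟩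
          rw [hupd j hj'] at hx hy
          exact hTu i hi' j hj' hij x hx y hy

theorem pow_mul_card_pow_le_sum_pow {ι : Type*} (s : Finset ι) (f : ι → ℝ)
    (hf : ∀ i ∈ s, 0 ≤ f i) {C : ℝ} (hC : 0 ≤ C) {t : ℕ} (ht : 0 < t)
    (h : C * (#s : ℝ) ^ (2 - 1 / t : ℝ) ≤ ∑ i ∈ s, f i) :
    C ^ t * (#s : ℝ) ^ t ≤ ∑ i ∈ s, f i ^ t := by
  obtain ⟨t, rfl⟩ : ∃ t', t = t' + 1 := ⟨t - 1, by omega⟩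
  rcases s.eq_empty_or_nonempty with rfl | hs
  · simp
  have hn : (0 : ℝ) < #s := by exact_mod_cast hs.card_pos
  have hexp : ((#s : ℝ) ^ (2 - 1 / (t + 1 : ℕ) : ℝ)) ^ (t + 1) = (#s : ℝ) ^ (t + 1) * #s ^ t := by
    rw [← Real.rpow_natCast, ← Real.rpow_mul hn.le, ← pow_add, ← Real.rpow_natCast]
    congr 1
    push_cast
    field_simp
    ring
  have := (pow_le_pow_left₀ (by positivity) h (t + 1)).trans
    ((div_le_iff₀ (by positivity)).1 (pow_sum_div_card_le_sum_pow hf t))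
  rw [mul_pow, hexp, ← mul_assoc] at this
  exact le_of_mul_le_mul_right this (by positivity)

theorem card_filter_forall_apply_mem {V : Type*} [Fintype V] [DecidableEq V] (t : ℕ)
    (A : Finset V) :
    #{x : Fin t → V | ∀ i, x i ∈ A} = #A ^ t := by
  rw [← Fintype.card_piFinset_const]
  congr 1
  ext x
  simp [Fintype.mem_piFinset]

namespace SimpleGraph

variable {V : Type*} [Fintype V] (G : SimpleGraph V) [DecidableRel G.Adj]

def commonNbhd (T : Finset V) : Finset V := {w | ∀ x ∈ T, G.Adj x w}

variable {G} in
theorem mem_commonNbhd {T : Finset V} {w : V} : w ∈ G.commonNbhd T ↔ ∀ x ∈ T, G.Adj x w := by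
  simp [commonNbhd]

theorem subset_commonNbhd_comm {S T : Finset V} : S ⊆ G.commonNbhd T ↔ T ⊆ G.commonNbhd S := by
  simp only [subset_iff, mem_commonNbhd]
  exact ⟨fun h x hx w hw => (h hw x hx).symm, fun h x hx w hw => (h hw x hx).symm⟩

theorem pow_mul_card_pow_le_sum_degree_pow {C : ℕ} {t : ℕ} (ht : 0 < t)
    (hG : (C : ℝ) * (Fintype.card V : ℝ) ^ (2 - 1 / t : ℝ) ≤ #G.edgeFinset) :
    C ^ t * Fintype.card V ^ t ≤ ∑ w, G.degree w ^ t := by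
  have hsum : (#G.edgeFinset : ℝ) ≤ ∑ w, (G.degree w : ℝ) := by
    rw [← Nat.cast_sum, sum_degrees_eq_twice_card_edges]
    push_cast
    linarith [(Nat.cast_nonneg #G.edgeFinset : (0 : ℝ) ≤ _)]
  have h := pow_mul_card_pow_le_sum_pow univ (fun w => (G.degree w : ℝ)) (fun _ _ => by positivity)
    (Nat.cast_nonneg C) ht (by simpa using hG.trans hsum)
  rw [card_univ] at h
  exact_mod_cast h

variable [DecidableEq V]

theorem sum_card_commonNbhd_image (t : ℕ) :
    ∑ x : Fin t → V, #(G.commonNbhd (univ.image x)) = ∑ w, G.degree w ^ t := by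
  have := sum_card_bipartiteAbove_eq_sum_card_bipartiteBelow (s := (univ : Finset (Fin t → V)))
    (t := (univ : Finset V)) (fun x w => w ∈ G.commonNbhd (univ.image x))
  refine (sum_congr rfl fun x _ => ?_).trans (this.trans (sum_congr rfl fun w _ => ?_))
  · simp [bipartiteAbove]
  · rw [← card_neighborFinset_eq_degree, ← card_filter_forall_apply_mem]
    congr 1
    ext x
    simp [bipartiteBelow, mem_commonNbhd, G.adj_comm]

theorem sum_card_subset_commonNbhd_image (t : ℕ) (𝒯 : Finset (Finset V)) :
    ∑ x : Fin t → V, #{T ∈ 𝒯 | T ⊆ G.commonNbhd (univ.image x)} =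
      ∑ T ∈ 𝒯, #(G.commonNbhd T) ^ t := by
  have := sum_card_bipartiteAbove_eq_sum_card_bipartiteBelow (s := (univ : Finset (Fin t → V)))
    (t := 𝒯) (fun x T => T ⊆ G.commonNbhd (univ.image x))
  refine this.trans (sum_congr rfl fun T _ => ?_)
  rw [← card_filter_forall_apply_mem]
  congr 1
  ext x
  simp [bipartiteBelow, G.subset_commonNbhd_comm (S := T), image_subset_iff]

/-- Dependent random choice: averaging over `t`-tuples `x` finds one whose common neighbourhood
has few `t`-subsets with fewer than `D` common neighbours; deleting a vertex from each of them
leaves `U`. -/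
theorem exists_le_card_forall_le_card_commonNbhd [Nonempty V] {t g D : ℕ} (ht : 0 < t)
    (hG : ((D + g + 1 : ℕ) : ℝ) * (Fintype.card V : ℝ) ^ (2 - 1 / t : ℝ) ≤ #G.edgeFinset) :
    ∃ U : Finset V, g ≤ #U ∧ ∀ T ⊆ U, #T = t → D ≤ #(G.commonNbhd T) := by
  set bad : Finset (Finset V) := {T ∈ powersetCard t univ | #(G.commonNbhd T) < D}
  set Y : (Fin t → V) → Finset (Finset V) := fun x => {T ∈ bad | T ⊆ G.commonNbhd (univ.image x)}
  have hY : ∑ x, #(Y x) ≤ Fintype.card V ^ t * D ^ t := by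
    rw [G.sum_card_subset_commonNbhd_image]
    calc ∑ T ∈ bad, #(G.commonNbhd T) ^ t ≤ ∑ _T ∈ bad, D ^ t :=
          sum_le_sum fun T hT => Nat.pow_le_pow_left (mem_filter.1 hT).2.le t
      _ ≤ Fintype.card V ^ t * D ^ t := by
          rw [sum_const, smul_eq_mul]
          refine Nat.mul_le_mul_right _ ((card_filter_le _ _).trans ?_)
          simpa using Nat.choose_le_pow (Fintype.card V) t
  have hC : D ^ t + g + 1 ≤ (D + g + 1) ^ t :=
    calc D ^ t + g + 1 ≤ D ^ t + (g + 1) ^ t := by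
          have := le_self_pow (M := ℕ) (a := g + 1) (by omega) ht.ne'
          omega
      _ ≤ (D + (g + 1)) ^ t := pow_add_pow_le (by omega) (by omega) ht.ne'
      _ = (D + g + 1) ^ t := by ring
  obtain ⟨x, hx⟩ : ∃ x : Fin t → V, #(Y x) + g ≤ #(G.commonNbhd (univ.image x)) := by
    by_contra! hlt
    have h1 := sum_lt_sum_of_nonempty univ_nonempty fun x (_ : x ∈ univ) => hlt x
    rw [G.sum_card_commonNbhd_image, sum_add_distrib, sum_const, card_univ, Fintype.card_fun,
      Fintype.card_fin, smul_eq_mul] at h1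
    have h2 := G.pow_mul_card_pow_le_sum_degree_pow ht hG
    have h3 : (D ^ t + g + 1) * Fintype.card V ^ t ≤ (D + g + 1) ^ t * Fintype.card V ^ t :=
      Nat.mul_le_mul_right _ hC
    have h4 : (D ^ t + g + 1) * Fintype.card V ^ t =
        Fintype.card V ^ t * D ^ t + Fintype.card V ^ t * g + Fintype.card V ^ t := by ring
    omega
  obtain ⟨U, hU, hUcard, hUY⟩ := exists_subset_forall_not_subset (G.commonNbhd (univ.image x))
    (Y x) fun T hT => card_pos.1 <| by
      rw [(mem_powersetCard.1 (mem_filter.1 (mem_filter.1 hT).1).1).2]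
      exact ht
  refine ⟨U, by omega, fun T hTU hT => ?_⟩
  by_contra! hlt
  exact hUY T (mem_filter.2 ⟨mem_filter.2 ⟨mem_powersetCard.2 ⟨subset_univ T, hT⟩, hlt⟩,
    hTU.trans hU⟩) hTU

end SimpleGraph

section ColourGraph

variable {α β : Type*}

def colourGraph (c : Sym2 α → β) (k : β) : SimpleGraph α := SimpleGraph.fromEdgeSet {e | c e = k}

variable {c : Sym2 α → β} {k : β}

theorem colourGraph_adj {x y : α} : (colourGraph c k).Adj x y ↔ c s(x, y) = k ∧ x ≠ y := by
  simp [colourGraph]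

instance [DecidableEq α] [DecidableEq β] : DecidableRel (colourGraph c k).Adj :=
  fun _ _ => decidable_of_iff _ colourGraph_adj.symm

theorem card_edgeFinset_colourGraph [Fintype α] [DecidableEq α] [DecidableEq β] :
    #(colourGraph c k).edgeFinset = {e : Sym2 α | ¬ e.IsDiag ∧ c e = k}.ncard := by
  rw [← Set.ncard_coe_finset, SimpleGraph.coe_edgeFinset, colourGraph,
    SimpleGraph.edgeSet_fromEdgeSet]
  congr 1
  ext e
  simp [and_comm]

end ColourGraph

theorem exists_uniform_homes {r : ℕ} (hr : 0 < r) (t N : ℕ) :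
    ∃ g : ℕ, ∀ {α : Type*} [Fintype α] [DecidableEq α] (c : Sym2 α → Fin r) (D : ℕ),
      (∀ k, ∃ U : Finset α, g ≤ #U ∧
        ∀ T ⊆ U, #T = t → D ≤ #((colourGraph c k).commonNbhd T)) →
      ∃ eH : Fin r × Fin N → α, Injective eH ∧ IsBlockUniform c eH ∧
        ∀ k (T : Finset (Fin N)), #T = t →
          D ≤ #((colourGraph c k).commonNbhd (T.image fun i => eH (k, i))) := by
  have : Nonempty (Fin r) := ⟨⟨0, hr⟩⟩
  obtain ⟨g, hg⟩ := exists_isBlockUniform (Fin r) r N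
  refine ⟨r * g, fun c D hrich => ?_⟩
  choose U hU hUrich using hrich
  obtain ⟨Z, hZ, hZdisj⟩ := exists_pairwise_disjoint_subsets U (m := g) (by simpa using hU)
  obtain ⟨eH, heHZ, heHinj, heHuni⟩ := hg c Z fun k => (hZ k).2.ge
  refine ⟨eH, injective_of_pairwise_disjoint hZdisj heHZ heHinj, heHuni, fun k T hT => ?_⟩
  refine hUrich k _ (image_subset_iff.2 fun i _ => (hZ k).1 (heHZ (k, i))) ?_
  rw [card_image_of_injective _ (heHinj k), hT]

theorem exists_compatible_twin_sets {r : ℕ} (hr : 0 < r) {t : ℕ} (ht : 0 < t) (m : ℕ) :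
    ∃ N D : ℕ, ∀ {α : Type*} [Fintype α] [DecidableEq α] (c : Sym2 α → Fin r)
      (eH : Fin r × Fin N → α), (∀ k (T : Finset (Fin N)), #T = t →
        D ≤ #((colourGraph c k).commonNbhd (T.image fun i => eH (k, i)))) →
      ∃ (T : Fin r → Finset (Fin N)) (W : Fin r → Finset α), ∀ k, #(T k) = t ∧ m ≤ #(W k) ∧
        Disjoint (W k) (univ.image eH) ∧ (∀ i ∈ T k, ∀ w ∈ W k, c s(eH (k, i), w) = k) ∧
        ∀ a, ∃ κ, ∀ i ∈ T a, ∀ w ∈ W k, c s(eH (a, i), w) = κ := by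
  have : Nonempty (Fin r) := ⟨⟨0, hr⟩⟩
  obtain ⟨N, hN⟩ := exists_compatible_subsets (Fin r) t r
  refine ⟨N, r ^ (r * N) * m + r * N, fun {α} _ _ c eH hrich => ?_⟩
  set H := univ.image eH
  set P : Fin r → Finset (Fin N) → Finset α := fun k T =>
    (colourGraph c k).commonNbhd (T.image fun i => eH (k, i)) \ H
  -- twin classes: vertices of `P k T` with the same colours towards all of `H`
  have htwins : ∀ k T, ∃ v : Fin r × Fin N → Fin r,
      #T = t → m ≤ #{w ∈ P k T | (fun p => c s(w, eH p)) = v} := fun k T => by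
    by_cases hT : #T = t
    · obtain ⟨v, hv⟩ := exists_le_card_filter_eq (P k T) (fun w p => c s(w, eH p)) (m := m) (by
        have := hrich k T hT
        have := card_le_card_sdiff_add_card
          (s := (colourGraph c k).commonNbhd (T.image fun i => eH (k, i))) (t := H)
        have : #H ≤ r * N := card_image_le.trans (by simp)
        simp only [P, Fintype.card_fun, Fintype.card_prod, Fintype.card_fin]
        omega)
      exact ⟨v, fun _ => hv⟩
    · exact ⟨fun _ => ⟨0, hr⟩, fun h => absurd h hT⟩
  choose v hv using htwins
  obtain ⟨T, hT, hTv⟩ := hN univ (fun _ => univ) (fun a b T x => v a T (b, x)) (by simp) (by simp)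
  set W : Fin r → Finset α := fun k => {w ∈ P k (T k) | (fun p => c s(w, eH p)) = v k (T k)}
  have hadj : ∀ k, ∀ i ∈ T k, ∀ w ∈ W k, c s(eH (k, i), w) = k := fun k i hi w hw =>
    (colourGraph_adj.1 (SimpleGraph.mem_commonNbhd.1 (mem_sdiff.1 (mem_filter.1 hw).1).1 _
      (mem_image_of_mem _ hi))).1
  refine ⟨T, W, fun k => ⟨(hT k (mem_univ k)).2, hv k _ (hT k (mem_univ k)).2,
    disjoint_left.2 fun w hw => (mem_sdiff.1 (mem_filter.1 hw).1).2, hadj k, fun a => ?_⟩⟩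
  by_cases hak : a = k
  · exact ⟨k, hak ▸ hadj a⟩
  obtain ⟨i₀, hi₀⟩ := card_pos.1 ((hT a (mem_univ a)).2 ▸ ht)
  refine ⟨v k (T k) (a, i₀), fun i hi w hw => ?_⟩
  rw [Sym2.eq_swap, congrFun (mem_filter.1 hw).2]
  exact hTv k (mem_univ k) a (mem_univ a) (Ne.symm hak) _ hi _ hi₀

theorem exists_blowup_of_twin_sets {r : ℕ} (hr : 0 < r) {t : ℕ} (ht : 0 < t) :
    ∃ M : ℕ, ∀ {α : Type*} [DecidableEq α] (c : Sym2 α → Fin r) {N : ℕ}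
      (eH : Fin r × Fin N → α), Injective eH → IsBlockUniform c eH →
      ∀ (T : Fin r → Finset (Fin N)) (W : Fin r → Finset α), (∀ k, #(T k) = t ∧ r * M ≤ #(W k) ∧
        Disjoint (W k) (univ.image eH) ∧ (∀ i ∈ T k, ∀ w ∈ W k, c s(eH (k, i), w) = k) ∧
        ∀ a, ∃ κ, ∀ i ∈ T a, ∀ w ∈ W k, c s(eH (a, i), w) = κ) →
      ∃ e : (Fin r ⊕ Fin r) × Fin t → α, Injective e ∧ IsBlockUniform c e ∧
        ∀ k, ∃ a b, a ≠ b ∧ c s(e a, e b) = k := by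
  have : Nonempty (Fin r) := ⟨⟨0, hr⟩⟩
  obtain ⟨M, hM⟩ := exists_isBlockUniform (Fin r) r t
  refine ⟨M, fun {α} _ c N eH heHinj heHuni T W hTW => ?_⟩
  choose hT hW hWH hWadj hWκ using hTW
  obtain ⟨Z, hZ, hZdisj⟩ := exists_pairwise_disjoint_subsets W (m := M) (by simpa using hW)
  obtain ⟨eY, heYZ, heYinj, heYuni⟩ := hM c Z fun k => (hZ k).2.ge
  have heYW : ∀ p, eY p ∈ W p.1 := fun p => (hZ p.1).1 (heYZ p)
  set σ : Fin r → Fin t ↪o Fin N := fun k => (T k).orderEmbOfFin (hT k)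
  have hσT : ∀ k j, σ k j ∈ T k := fun k j => orderEmbOfFin_mem _ _ j
  set eT : Fin r × Fin t → α := fun p => eH (p.1, σ p.1 p.2)
  have heTinj : Injective eT := fun p q h => by
    have := heHinj h
    simp only [Prod.mk.injEq] at this
    exact Prod.ext this.1 ((σ p.1).injective (this.1 ▸ this.2))
  refine ⟨blockSum eT eY, injective_blockSum heTinj
      (injective_of_pairwise_disjoint hZdisj heYZ heYinj) fun p q h =>
        disjoint_left.1 (hWH q.1) (heYW q) (h ▸ mem_image_of_mem eH (mem_univ _)),
    (heHuni.reindex (fun k => σ k) fun k => (σ k).injective).blockSum heYuni fun a b => ?_,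
    fun k => ⟨(.inl k, ⟨0, ht⟩), (.inr k, ⟨0, ht⟩), by simp, hWadj k _ (hσT k _) _ (heYW _)⟩⟩
  obtain ⟨κ, hκ⟩ := hWκ b a
  exact ⟨κ, fun j j' => hκ _ (hσT a j) _ (heYW (b, j'))⟩

theorem exists_blowup_of_rich_sets {r : ℕ} (hr : 0 < r) {t : ℕ} (ht : 0 < t) :
    ∃ g D : ℕ, ∀ {α : Type*} [Fintype α] [DecidableEq α] (c : Sym2 α → Fin r),
      (∀ k, ∃ U : Finset α, g ≤ #U ∧
        ∀ T ⊆ U, #T = t → D ≤ #((colourGraph c k).commonNbhd T)) →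
      ∃ e : (Fin r ⊕ Fin r) × Fin t → α, Injective e ∧ IsBlockUniform c e ∧
        ∀ k, ∃ a b, a ≠ b ∧ c s(e a, e b) = k := by
  obtain ⟨M, hM⟩ := exists_blowup_of_twin_sets hr ht
  obtain ⟨N, D, hND⟩ := exists_compatible_twin_sets hr ht (r * M)
  obtain ⟨g, hg⟩ := exists_uniform_homes hr t N
  refine ⟨g, D, fun c hrich => ?_⟩
  obtain ⟨eH, heHinj, heHuni, heHrich⟩ := hg c D hrich
  obtain ⟨T, W, hTW⟩ := hND c eH heHrich
  exact hM c eH heHinj heHuni T W hTW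

/-- For all `r, t` there is a constant `C = C(r,t) > 0` such that every
`r`-colouring of the edges of a sufficiently large complete graph `K_n` in
which every colour appears on at least `C·n^{2-1/t}` edges contains an
`(r,t)`-unavoidable graph. -/
theorem unavoidable_patterns (r t : ℕ) :
    ∃ C : ℝ, 0 < C ∧ ∃ n₀ : ℕ, ∀ n : ℕ, n₀ ≤ n →
      ∀ c : Sym2 (Fin n) → Fin r,
        (∀ k : Fin r,
          C * (n : ℝ) ^ ((2 : ℝ) - 1 / (t : ℝ)) ≤
            ({e : Sym2 (Fin n) | ¬ e.IsDiag ∧ c e = k}.ncard : ℝ)) →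
        ContainsUnavoidable r t n c := by
  rcases Nat.eq_zero_or_pos t with rfl | ht
  · exact ⟨1, one_pos, 0, fun n _ c _ => containsUnavoidable_zero r n c⟩
  rcases Nat.eq_zero_or_pos r with rfl | hr
  · exact ⟨1, one_pos, 1, fun n hn c _ => (c s(⟨0, hn⟩, ⟨0, hn⟩)).elim0⟩
  obtain ⟨g, D, hgD⟩ := exists_blowup_of_rich_sets hr ht
  refine ⟨((D + g + 1 : ℕ) : ℝ), by positivity, 1, fun n hn c hc => ?_⟩
  have : Nonempty (Fin n) := ⟨⟨0, hn⟩⟩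
  obtain ⟨e, he, hu, hall⟩ := hgD c fun k =>
    (colourGraph c k).exists_le_card_forall_le_card_commonNbhd ht (by
      rw [Fintype.card_fin, card_edgeFinset_colourGraph]
      exact hc k)
  exact containsUnavoidable_of_isBlockUniform ht he hu hall
end

section
/- Every r-minimal graph has at most 2r vertices; consequently, for every r, t ∈ ℕ the family 𝓕ʳₜ of (r,t)-unavoidable graphs is finite. -/
/-- An edge-coloured complete graph on `Fin m` (with edge colouring
`χ' : Sym2 (Fin m) → Fin r`; the values on diagonal pairs are determined by
the colouring so we include them) is `(r,t)`-unavoidable if it is the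
`t`-blowup of some `r`-minimal graph: there is an `r`-minimal `χ` on `Fin v`
and an identification `Fin m ≃ Fin v × Fin t` under which `χ'` is the blowup
colouring of `χ`. -/
def IsUnavoidable (r t m : ℕ) (χ' : Sym2 (Fin m) → Fin r) : Prop :=
  ∃ (v : ℕ) (χ : Sym2 (Fin v) → Fin r) (eqv : Fin m ≃ Fin v × Fin t),
    IsRMinimal r v χ ∧
      ∀ e : Sym2 (Fin m), χ' e = χ (Sym2.map Prod.fst (Sym2.map eqv e))

/-!
Deleting any single vertex `a` of an `r`-minimal graph loses some colour `c a`, so every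
occurrence of `c a` involves `a`. Fix one occurrence of each colour `k`, on the (possibly
degenerate) edge `xy`; then `c a = k` forces `a ∈ {x, y}`. Hence `c` is at most
two-to-one and there are at most `2r` vertices. A `t`-blowup of such a graph has at most
`2rt` vertices, and there are only finitely many colourings of a bounded number of vertices.
-/

theorem Set.finite_sigma_fst_le {β : ℕ → Type*} [∀ m, Finite (β m)] (N : ℕ) :
    {x : Σ m, β m | x.1 ≤ N}.Finite := by
  refine ((Set.finite_Iic N).biUnion fun m _ => Set.finite_range (Sigma.mk m)).subset ?_
  rintro ⟨m, y⟩ hm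
  exact Set.mem_biUnion hm ⟨y, rfl⟩

namespace IsRMinimal

open Finset

variable {r v : ℕ} {χ : Sym2 (Fin v) → Fin r}

theorem exists_colour_missing_off_vertex (hχ : IsRMinimal r v χ) (a : Fin v) :
    ∃ k : Fin r, ∀ p ∈ univ.erase a, ∀ q ∈ univ.erase a, χ s(p, q) ≠ k :=
  hχ.2 _ fun h => notMem_erase a univ (by rw [h]; exact mem_univ a)

theorem card_le (hχ : IsRMinimal r v χ) : v ≤ 2 * r := by
  choose c hc using hχ.exists_colour_missing_off_vertex
  have fibre_card_le_two : ∀ k ∈ univ.image c, #{a | c a = k} ≤ 2 := by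
    intro k _
    obtain ⟨x, y, hxy⟩ := hχ.1 k
    have fibre_sub : ({a | c a = k} : Finset (Fin v)) ⊆ {x, y} := by
      intro a ha
      rw [mem_filter] at ha
      by_contra hxy_a
      simp only [mem_insert, mem_singleton, not_or] at hxy_a
      exact hc a x (mem_erase.2 ⟨Ne.symm hxy_a.1, mem_univ x⟩)
        y (mem_erase.2 ⟨Ne.symm hxy_a.2, mem_univ y⟩) (ha.2 ▸ hxy)
    exact (card_le_card fibre_sub).trans card_le_two
  calc v = #(univ : Finset (Fin v)) := (card_fin v).symm
    _ ≤ 2 * #(univ.image c) := card_le_mul_card_image _ 2 fibre_card_le_two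
    _ ≤ 2 * r := by
      gcongr
      simpa using card_le_univ (univ.image c)

end IsRMinimal

theorem IsUnavoidable.card_le {r t m : ℕ} {χ' : Sym2 (Fin m) → Fin r}
    (h : IsUnavoidable r t m χ') : m ≤ 2 * r * t := by
  obtain ⟨v, χ, eqv, hχ, -⟩ := h
  calc m = v * t := by simpa using Fintype.card_congr eqv
    _ ≤ 2 * r * t := Nat.mul_le_mul_right t hχ.card_le

/-- Every `r`-minimal graph has at most `2r` vertices; consequently, for every
`t`, the family `𝓕ʳₜ` of `(r,t)`-unavoidable graphs is finite. -/
theorem rMinimal_card_le_and_unavoidable_finite (r : ℕ) :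
    (∀ (v : ℕ) (χ : Sym2 (Fin v) → Fin r), IsRMinimal r v χ → v ≤ 2 * r) ∧
      ∀ t : ℕ,
        {x : Σ m : ℕ, Sym2 (Fin m) → Fin r | IsUnavoidable r t x.1 x.2}.Finite :=
  ⟨fun _ _ hχ => hχ.card_le, fun t =>
    (Set.finite_sigma_fst_le (2 * r * t)).subset fun _ hx => IsUnavoidable.card_le hx⟩
end

section
/- Let G, H be graphs and r ≥ 2 an integer such that G →ᵣ H. Then there is a constant c = c(G, H, r) such that for every t ∈ ℕ, B(G →ᵣ H; t) ≤ cᵗ. -/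
/-- `Arrows G H r` : every `r`-colouring of the edges of `G` contains a
monochromatic copy of `H`. -/
def Arrows {α β : Type*} (G : SimpleGraph α) (H : SimpleGraph β) (r : ℕ) : Prop :=
  ∀ c : Sym2 α → Fin r, ∃ f : β → α, Function.Injective f ∧
    ∃ k : Fin r, ∀ u v : β, H.Adj u v → G.Adj (f u) (f v) ∧ c s(f u, f v) = k

/-- `HasMonoCanonCopy G H n t r c` : the colouring `c` of the edges of the
`n`-blowup `G[n]` contains a monochromatic canonical copy of the `t`-blowup
`H[t]`. -/
def HasMonoCanonCopy {α β : Type*} (G : SimpleGraph α) (H : SimpleGraph β)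
    (n t r : ℕ) (c : Sym2 (α × Fin n) → Fin r) : Prop :=
  ∃ f : β → α, Function.Injective f ∧
    ∃ g : β → Fin t → Fin n, (∀ u, Function.Injective (g u)) ∧
      ∃ k : Fin r, ∀ u v : β, H.Adj u v →
        G.Adj (f u) (f v) ∧ ∀ i j, c s((f u, g u i), (f v, g v j)) = k

/-- The blowup Ramsey number `B(G →ᵣ H; t)`: the least `n` such that every
`r`-colouring of the edges of `G[n]` contains a monochromatic canonical copy
of `H[t]`. -/
noncomputable def blowupRamsey {α β : Type*} (G : SimpleGraph α) (H : SimpleGraph β)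
    (r t : ℕ) : ℕ :=
  sInf {n : ℕ | ∀ c : Sym2 (α × Fin n) → Fin r, HasMonoCanonCopy G H n t r c}

/-!
Since `G →ᵣ H`, every transversal of the parts of `G[n]` contains a monochromatic copy of `H`. By
pigeonhole over the `M` patterns (embedding of `H` into `G`, colour), some pattern has at least a
`1 / M` proportion of its lifts monochromatic, and a cleaning argument then gives one such lift `x`
for which replacing any single vertex `x v` by one of at least a `1 / (2 |H| M)` proportion of its
part keeps the lift monochromatic. Shrinking the parts to these replacements and repeating, every
later lift of the same pattern is joined to `x` in the right colour. After `M (t - 1) + 1` rounds some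
pattern has been chosen `t` times, and its `t` lifts are the layers of a monochromatic canonical
`H[t]`; each round shrinks the parts by a constant factor, so `n = (4 |H| M) ^ (M (t - 1) + 1)`
suffices.
-/

open Finset Function

section Boxes

variable {α β ι : Type*} [Fintype β] [DecidableEq β] [DecidableEq ι]

lemma card_le_card_filter_update_mem {A : β → Finset ι} {s T : Finset (β → ι)}
    (hs : s ⊆ Fintype.piFinset A) (hT : T ⊆ s) (x₀ : β → ι) (v : β)
    (hTx : ∀ y ∈ T, ∀ u ≠ v, y u = x₀ u) :
    #T ≤ #{w ∈ A v | update x₀ v w ∈ s} := by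
  have hupdate : ∀ y ∈ T, update x₀ v (y v) = y := fun y hy =>
    (eq_update_iff.2 ⟨rfl, hTx y hy⟩).symm
  refine card_le_card_of_injOn (· v) (fun y hy => ?_) (fun y hy z hz hyz => ?_)
  · have hys := hT hy
    exact mem_filter.2 ⟨Fintype.mem_piFinset.1 (hs hys) v, by rwa [hupdate y hy]⟩
  · rw [← hupdate y hy, ← hupdate z hz]
    exact congrArg _ hyz

lemma mul_card_filter_lt_le_prod {A : β → Finset ι} {s : Finset (β → ι)}
    (hs : s ⊆ Fintype.piFinset A) (D : ℕ) (v : β) :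
    D * #{x ∈ s | D * #{w ∈ A v | update x v w ∈ s} < #(A v)} ≤ ∏ u, #(A u) := by
  set bad := {x ∈ s | D * #{w ∈ A v | update x v w ∈ s} < #(A v)}
  set π : (β → ι) → ({u // u ≠ v} → ι) := fun x u => x u
  set t := Fintype.piFinset fun u : {u // u ≠ v} => A u
  have hmaps : ∀ x ∈ bad, π x ∈ t := fun x hx =>
    Fintype.mem_piFinset.2 fun u => Fintype.mem_piFinset.1 (hs (mem_filter.1 hx).1) u
  have hclass : ∀ z ∈ t, D * #{x ∈ bad | π x = z} ≤ #(A v) := by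
    intro z _
    rcases eq_empty_or_nonempty {x ∈ bad | π x = z} with h | ⟨x₀, hx₀⟩
    · simp [h]
    obtain ⟨hx₀bad, hx₀z⟩ := mem_filter.1 hx₀
    have hT : {x ∈ bad | π x = z} ⊆ s := (filter_subset _ _).trans (filter_subset _ _)
    have hagree : ∀ y ∈ {x ∈ bad | π x = z}, ∀ u ≠ v, y u = x₀ u := fun y hy u hu =>
      congrFun ((mem_filter.1 hy).2.trans hx₀z.symm) ⟨u, hu⟩
    calc D * #{x ∈ bad | π x = z}
        ≤ D * #{w ∈ A v | update x₀ v w ∈ s} :=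
          Nat.mul_le_mul_left _ (card_le_card_filter_update_mem hs hT x₀ v hagree)
      _ ≤ #(A v) := (mem_filter.1 hx₀bad).2.le
  calc D * #bad = ∑ z ∈ t, D * #{x ∈ bad | π x = z} := by
        rw [card_eq_sum_card_fiberwise hmaps, mul_sum]
    _ ≤ ∑ _z ∈ t, #(A v) := sum_le_sum hclass
    _ = ∏ u, #(A u) := by
        rw [sum_const, smul_eq_mul, Fintype.card_piFinset, Fintype.prod_eq_mul_prod_subtype_ne _ v,
          mul_comm]

/-- `{w ∈ A v | update x v w ∈ s}` is the trace of `s` on the axis-parallel line through `x` in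
direction `v`. -/
lemma exists_mem_forall_card_le_mul_card_filter_update_mem [Nonempty β] {A : β → Finset ι}
    {s : Finset (β → ι)} (hs : s ⊆ Fintype.piFinset A) (hA : ∀ v, (A v).Nonempty) (M : ℕ)
    (hM : ∏ v, #(A v) ≤ M * #s) :
    ∃ x ∈ s, ∀ v, #(A v) ≤ 2 * Fintype.card β * M * #{w ∈ A v | update x v w ∈ s} := by
  by_contra! h
  set D := 2 * Fintype.card β * M
  set P := ∏ v, #(A v)
  have hcover : s ⊆ univ.biUnion fun v => {x ∈ s | D * #{w ∈ A v | update x v w ∈ s} < #(A v)} := by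
    intro x hx
    obtain ⟨v, hv⟩ := h x hx
    exact mem_biUnion.2 ⟨v, mem_univ v, mem_filter.2 ⟨hx, hv⟩⟩
  have hcount : D * #s ≤ Fintype.card β * P :=
    calc D * #s ≤ D * ∑ v, #{x ∈ s | D * #{w ∈ A v | update x v w ∈ s} < #(A v)} :=
          Nat.mul_le_mul_left _ ((card_le_card hcover).trans card_biUnion_le)
      _ = ∑ v, D * #{x ∈ s | D * #{w ∈ A v | update x v w ∈ s} < #(A v)} := mul_sum _ _ _
      _ ≤ ∑ _v : β, P := sum_le_sum fun v _ => mul_card_filter_lt_le_prod hs D v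
      _ = Fintype.card β * P := by rw [sum_const, card_univ, smul_eq_mul]
  have hP : 0 < Fintype.card β * P :=
    Nat.mul_pos Fintype.card_pos (prod_pos fun v _ => (hA v).card_pos)
  have hPM : Fintype.card β * P ≤ Fintype.card β * (M * #s) := Nat.mul_le_mul_left _ hM
  have hD : D * #s = 2 * (Fintype.card β * (M * #s)) := by ring
  omega

end Boxes

section Embeddings

variable {α β ι : Type*} [Fintype α] [Fintype β]

lemma prod_eq_prod_comp_mul_prod_compl_range {M : Type*} [CommMonoid M] (f : β ↪ α)
    [DecidablePred (· ∈ Set.range f)] (g : α → M) :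
    ∏ a, g a = (∏ b, g (f b)) * ∏ a : {a // a ∉ Set.range f}, g a := by
  rw [← Fintype.prod_subtype_mul_prod_subtype (· ∈ Set.range f) g]
  congr 1
  convert (Fintype.prod_equiv (Equiv.ofInjective f f.injective) (fun b => g (f b)) (fun a => g a)
    fun b => rfl).symm

lemma card_filter_piFinset_comp_le [DecidableEq α] [DecidableEq β] (f : β ↪ α)
    [DecidablePred (· ∈ Set.range f)] (A : α → Finset ι)
    (P : (β → ι) → Prop) [DecidablePred P] :
    #{y ∈ Fintype.piFinset A | P (y ∘ f)} ≤
      #{x ∈ Fintype.piFinset (fun b => A (f b)) | P x} * ∏ a : {a // a ∉ Set.range f}, #(A a) := by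
  rw [← Fintype.card_piFinset (fun a : {a // a ∉ Set.range f} => A a), ← card_product]
  refine card_le_card_of_injOn (fun y => (y ∘ f, fun a => y a)) (fun y hy => ?_)
    (fun y _ z _ hyz => funext fun a => ?_)
  · obtain ⟨hyA, hyP⟩ := mem_filter.1 hy
    have hyA := Fintype.mem_piFinset.1 hyA
    exact mem_product.2 ⟨mem_filter.2 ⟨Fintype.mem_piFinset.2 fun b => hyA _, hyP⟩,
      Fintype.mem_piFinset.2 fun a => hyA a⟩
  · by_cases ha : a ∈ Set.range f
    · obtain ⟨b, rfl⟩ := ha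
      exact congrFun (congrArg Prod.fst hyz) b
    · exact congrFun (congrArg Prod.snd hyz) ⟨a, ha⟩

end Embeddings

section Lifts

variable {α β ι κ : Type*} (G : SimpleGraph α) (H : SimpleGraph β) (c : Sym2 (α × ι) → κ)
  (f : β → α) (k : κ)

/-- The lift `x` of `f` maps `v` to the vertex `(f v, x v)` of the blowup. -/
def IsMonoLift (x : β → ι) : Prop :=
  ∀ u v, H.Adj u v → G.Adj (f u) (f v) ∧ c s((f u, x u), (f v, x v)) = k

open Classical in
noncomputable def monoLifts [Fintype β] [DecidableEq β] (S : α → Finset ι) : Finset (β → ι) :=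
  {x ∈ Fintype.piFinset fun b => S (f b) | IsMonoLift G H c f k x}

def MonoSwaps [DecidableEq β] (x : β → ι) (S : α → Finset ι) : Prop :=
  ∀ v, ∀ w ∈ S (f v), IsMonoLift G H c f k (update x v w) ∧ w ≠ x v

/-- The lifts in `X` are the layers of a monochromatic canonical copy of `H[#X]` over `f`. -/
def IsMonoLayering (X : Finset (β → ι)) : Prop :=
  (∀ x ∈ X, ∀ y ∈ X, ∀ u v, H.Adj u v → G.Adj (f u) (f v) ∧ c s((f u, x u), (f v, y v)) = k) ∧
    ∀ v, Set.InjOn (fun x : β → ι => x v) X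

variable {G H c f k}

lemma MonoSwaps.mono [DecidableEq β] {x : β → ι} {S S' : α → Finset ι} (hx : MonoSwaps G H c f k x S)
    (hS : ∀ a, S' a ⊆ S a) : MonoSwaps G H c f k x S' :=
  fun v w hw => hx v w (hS _ hw)

lemma MonoSwaps.adj [DecidableEq β] {x : β → ι} {S : α → Finset ι} (hx : MonoSwaps G H c f k x S)
    {u v : β} (huv : H.Adj u v) {w : ι} (hw : w ∈ S (f v)) :
    G.Adj (f u) (f v) ∧ c s((f u, x u), (f v, w)) = k := by
  simpa [update_of_ne huv.ne] using (hx v w hw).1 u v huv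

lemma IsMonoLayering.insert [DecidableEq β] [DecidableEq (β → ι)] {X : Finset (β → ι)}
    {S : α → Finset ι} {x : β → ι} (hX : IsMonoLayering G H c f k X)
    (hXS : ∀ y ∈ X, MonoSwaps G H c f k y S) (hx : IsMonoLift G H c f k x)
    (hxS : ∀ b, x b ∈ S (f b)) : IsMonoLayering G H c f k (insert x X) := by
  have hfresh : ∀ y ∈ X, ∀ b, x b ≠ y b := fun y hy b => (hXS y hy b (x b) (hxS b)).2
  refine ⟨fun y hy z hz u v huv => ?_, fun v y hy z hz hyz => ?_⟩
  · rw [mem_insert] at hy hz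
    rcases hy with rfl | hy <;> rcases hz with rfl | hz
    · exact hx u v huv
    · obtain ⟨-, hcol⟩ := (hXS z hz).adj huv.symm (hxS u)
      exact ⟨(hx u v huv).1, by rw [Sym2.eq_swap]; exact hcol⟩
    · exact (hXS y hy).adj huv (hxS v)
    · exact hX.1 y hy z hz u v huv
  · simp only [coe_insert, Set.mem_insert_iff, mem_coe] at hy hz
    rcases hy with rfl | hy <;> rcases hz with rfl | hz
    · rfl
    · exact absurd hyz (hfresh z hz v)
    · exact absurd hyz.symm (hfresh y hy v)
    · exact hX.2 v hy hz hyz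

end Lifts

noncomputable def numPatterns (α β : Type*) [Fintype α] [Fintype β] (r : ℕ) : ℕ :=
  Fintype.card ((β ↪ α) × Fin r)

section Iteration

variable {α β ι : Type*} {G : SimpleGraph α} {H : SimpleGraph β} {r : ℕ}

lemma Arrows.exists_isMonoLift (hGH : Arrows G H r) (c : Sym2 (α × ι) → Fin r) (y : α → ι) :
    ∃ q : (β ↪ α) × Fin r, IsMonoLift G H c q.1 q.2 (y ∘ q.1) := by
  obtain ⟨f, hf, k, hk⟩ := hGH fun e => c (e.map fun a => (a, y a))
  exact ⟨(⟨f, hf⟩, k), fun u v huv => by simpa using hk u v huv⟩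

variable [Fintype α] [Fintype β] [DecidableEq α] [DecidableEq β]

lemma Arrows.exists_prod_card_le_mul_card_monoLifts (hGH : Arrows G H r)
    (c : Sym2 (α × ι) → Fin r) (S : α → Finset ι) (hS : ∀ a, (S a).Nonempty) :
    ∃ q : (β ↪ α) × Fin r,
      ∏ b, #(S (q.1 b)) ≤ numPatterns α β r * #(monoLifts G H c q.1 q.2 S) := by
  classical
  choose F hF using hGH.exists_isMonoLift c
  set B := Fintype.piFinset S
  -- pigeonhole on the pattern that `Arrows` picks in each transversal `y` of the parts
  obtain ⟨q, -, hq⟩ : ∃ q ∈ univ, #B ≤ numPatterns α β r * #{y ∈ B | F y = q} := by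
    refine exists_le_of_sum_le ⟨F fun a => (hS a).choose, mem_univ _⟩ (le_of_eq ?_)
    rw [sum_const, card_univ, smul_eq_mul, ← mul_sum,
      ← card_eq_sum_card_fiberwise fun y _ => mem_univ (F y), numPatterns]
  refine ⟨q, Nat.le_of_mul_le_mul_right (c := ∏ a : {a // a ∉ Set.range q.1}, #(S a)) ?_
    (prod_pos fun a _ => (hS a).card_pos)⟩
  calc (∏ b, #(S (q.1 b))) * ∏ a : {a // a ∉ Set.range q.1}, #(S a)
      = #B := by rw [Fintype.card_piFinset, prod_eq_prod_comp_mul_prod_compl_range q.1]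
    _ ≤ numPatterns α β r * #{y ∈ B | IsMonoLift G H c q.1 q.2 (y ∘ q.1)} :=
        hq.trans (Nat.mul_le_mul_left _ (card_le_card (monotone_filter_right _
          fun y _ (hy : F y = q) => by rw [← hy]; exact hF y)))
    _ ≤ numPatterns α β r *
          (#(monoLifts G H c q.1 q.2 S) * ∏ a : {a // a ∉ Set.range q.1}, #(S a)) :=
        Nat.mul_le_mul_left _ (card_filter_piFinset_comp_le q.1 S (IsMonoLift G H c q.1 q.2))
    _ = _ := (mul_assoc _ _ _).symm

lemma Arrows.exists_monoLift_monoSwaps [DecidableEq ι] [Nonempty β] (hGH : Arrows G H r)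
    (c : Sym2 (α × ι) → Fin r) (S : α → Finset ι) (hS : ∀ a, (S a).Nonempty) :
    ∃ (q : (β ↪ α) × Fin r) (x : β → ι) (S' : α → Finset ι),
      x ∈ monoLifts G H c q.1 q.2 S ∧ (∀ a, S' a ⊆ S a) ∧
      (∀ a, #(S a) ≤ 2 * Fintype.card β * numPatterns α β r * (#(S' a) + 1)) ∧
      MonoSwaps G H c q.1 q.2 x S' := by
  classical
  obtain ⟨q, hq⟩ := hGH.exists_prod_card_le_mul_card_monoLifts c S hS
  obtain ⟨x, hx, hlines⟩ := exists_mem_forall_card_le_mul_card_filter_update_mem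
    (filter_subset _ _) (fun b => hS (q.1 b)) _ hq
  set S' : α → Finset ι := fun a =>
    {w ∈ S a | ∀ b, q.1 b = a → IsMonoLift G H c q.1 q.2 (update x b w) ∧ w ≠ x b}
  refine ⟨q, x, S', hx, fun a => filter_subset _ _, fun a => ?_,
    fun b w hw => (mem_filter.1 hw).2 b rfl⟩
  by_cases ha : a ∈ Set.range q.1
  · obtain ⟨b, rfl⟩ := ha
    have hline : {w ∈ S (q.1 b) | update x b w ∈ monoLifts G H c q.1 q.2 S} ⊆
        insert (x b) (S' (q.1 b)) := by
      intro w hw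
      obtain ⟨hwS, hwL⟩ := mem_filter.1 hw
      rcases eq_or_ne w (x b) with rfl | hne
      · exact mem_insert_self _ _
      refine mem_insert_of_mem (mem_filter.2 ⟨hwS, fun b' hb' => ?_⟩)
      obtain rfl := q.1.injective hb'
      exact ⟨(mem_filter.1 hwL).2, hne⟩
    exact (hlines b).trans
      (Nat.mul_le_mul_left _ ((card_le_card hline).trans (card_insert_le _ _)))
  · have hS'a : S' a = S a := filter_true_of_mem fun w _ b hb => absurd ⟨b, hb⟩ ha
    have hM : 0 < numPatterns α β r := Fintype.card_pos_iff.2 ⟨q⟩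
    have hβ : 0 < Fintype.card β := Fintype.card_pos
    rw [hS'a]
    exact (Nat.le_succ _).trans (Nat.le_mul_of_pos_left _ (by positivity))

lemma Arrows.exists_monoLayerings [DecidableEq ι] [Nonempty β] (hM : 0 < numPatterns α β r)
    (hGH : Arrows G H r) (c : Sym2 (α × ι) → Fin r)
    (j : ℕ) (S : α → Finset ι) (X : (β ↪ α) × Fin r → Finset (β → ι))
    (hS : ∀ a, (4 * Fintype.card β * numPatterns α β r) ^ j ≤ #(S a))
    (hX : ∀ q, IsMonoLayering G H c q.1 q.2 (X q))
    (hXS : ∀ q, ∀ y ∈ X q, MonoSwaps G H c q.1 q.2 y S) :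
    ∃ X' : (β ↪ α) × Fin r → Finset (β → ι), (∀ q, IsMonoLayering G H c q.1 q.2 (X' q)) ∧
      ∑ q, #(X q) + j ≤ ∑ q, #(X' q) := by
  classical
  induction j generalizing S X with
  | zero => exact ⟨X, hX, le_rfl⟩
  | succ j ih =>
    have hβ : 0 < Fintype.card β := Fintype.card_pos
    have hK : 0 < (4 * Fintype.card β * numPatterns α β r) ^ j := by positivity
    have hSne : ∀ a, (S a).Nonempty := fun a =>
      card_pos.1 <| lt_of_lt_of_le (by positivity) (hS a)
    obtain ⟨q, x, S', hx, hS'S, hS'card, hxS'⟩ := hGH.exists_monoLift_monoSwaps c S hSne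
    obtain ⟨hxS, hxmono⟩ := mem_filter.1 hx
    replace hxS := Fintype.mem_piFinset.1 hxS
    have hxX : x ∉ X q := fun h =>
      (hXS q x h (Classical.arbitrary β) _ (hxS (Classical.arbitrary β))).2 rfl
    have hS' : ∀ a, (4 * Fintype.card β * numPatterns α β r) ^ j ≤ #(S' a) := by
      intro a
      have h : 2 * Fintype.card β * numPatterns α β r *
          (2 * (4 * Fintype.card β * numPatterns α β r) ^ j) ≤
          2 * Fintype.card β * numPatterns α β r * (#(S' a) + 1) :=
        calc _ = (4 * Fintype.card β * numPatterns α β r) ^ (j + 1) := by ring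
          _ ≤ _ := (hS a).trans (hS'card a)
      have := Nat.le_of_mul_le_mul_left h (by positivity)
      omega
    obtain ⟨X', hX', hsum⟩ := ih S' (update X q (insert x (X q))) hS'
      (fun q' => by
        rcases eq_or_ne q' q with rfl | hne
        · rw [update_self]
          exact (hX q').insert (hXS q') hxmono hxS
        · rw [update_of_ne hne]
          exact hX q')
      (fun q' y hy => by
        rcases eq_or_ne q' q with rfl | hne
        · rw [update_self, mem_insert] at hy
          rcases hy with rfl | hy
          · exact hxS'
          · exact (hXS q' y hy).mono hS'S
        · rw [update_of_ne hne] at hy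
          exact (hXS q' y hy).mono hS'S)
    refine ⟨X', hX', le_trans (le_of_eq ?_) hsum⟩
    rw [sum_congr rfl fun q' _ => apply_update (fun _ => card) X q (insert x (X q)) q',
      sum_update_of_mem (mem_univ q), card_insert_of_notMem hxX,
      ← add_sum_erase _ _ (mem_univ q), sdiff_singleton_eq_erase]
    omega

end Iteration

section Bounds

variable {α β : Type*} {G : SimpleGraph α} {H : SimpleGraph β} {r t : ℕ}

lemma IsMonoLayering.hasMonoCanonCopy {n : ℕ} {c : Sym2 (α × Fin n) → Fin r} {f : β ↪ α}
    {k : Fin r} {X : Finset (β → Fin n)} (hX : IsMonoLayering G H c f k X) (hne : X.Nonempty)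
    (ht : t ≤ #X) : HasMonoCanonCopy G H n t r c := by
  obtain ⟨x₀, hx₀⟩ := hne
  let e : Fin t ↪ X := (Fin.castLEEmb ht).trans X.equivFin.symm.toEmbedding
  exact ⟨f, f.injective, fun u i => (e i : β → Fin n) u,
    fun u i j hij => e.injective (Subtype.ext (hX.2 u (e i).2 (e j).2 hij)), k,
    fun u v huv => ⟨(hX.1 x₀ hx₀ x₀ hx₀ u v huv).1, fun i j => (hX.1 _ (e i).2 _ (e j).2 u v huv).2⟩⟩

lemma blowupRamsey_le {n : ℕ} (h : ∀ c : Sym2 (α × Fin n) → Fin r, HasMonoCanonCopy G H n t r c) :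
    blowupRamsey G H r t ≤ n :=
  Nat.sInf_le h

lemma Arrows.blowupRamsey_le_one (hGH : Arrows G H r) (h : t ≤ 1 ∨ IsEmpty β) :
    blowupRamsey G H r t ≤ 1 := by
  refine blowupRamsey_le fun c => ?_
  obtain ⟨q, hq⟩ := hGH.exists_isMonoLift c fun _ => 0
  refine ⟨q.1, q.1.injective, fun _ _ => 0, fun u => ?_, q.2,
    fun u v huv => ⟨(hq u v huv).1, fun _ _ => (hq u v huv).2⟩⟩
  rcases h with ht | hβ
  · have := Fin.subsingleton_iff_le_one.2 ht
    exact fun i j _ => Subsingleton.elim i j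
  · exact isEmptyElim u

lemma Arrows.blowupRamsey_le_pow [Fintype α] [Fintype β] [DecidableEq α] [DecidableEq β]
    [Nonempty β] (hr : 0 < r) (hGH : Arrows G H r) (ht : 0 < t) :
    blowupRamsey G H r t ≤
      ((4 * Fintype.card β * numPatterns α β r) ^ numPatterns α β r) ^ t := by
  have hM : 0 < numPatterns α β r := by
    obtain ⟨f, hf, -⟩ := hGH fun _ => ⟨0, hr⟩
    exact Fintype.card_pos_iff.2 ⟨(⟨f, hf⟩, ⟨0, hr⟩)⟩
  have hβ : 0 < Fintype.card β := Fintype.card_pos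
  calc blowupRamsey G H r t
      ≤ (4 * Fintype.card β * numPatterns α β r) ^ (numPatterns α β r * (t - 1) + 1) :=
        blowupRamsey_le fun c => ?_
    _ ≤ (4 * Fintype.card β * numPatterns α β r) ^ (numPatterns α β r * t) :=
        Nat.pow_le_pow_right (by positivity) <| by
          rw [Nat.mul_sub_one]
          have := Nat.le_mul_of_pos_right (numPatterns α β r) ht
          omega
    _ = _ := pow_mul _ _ _
  obtain ⟨X, hX, hsum⟩ := hGH.exists_monoLayerings hM c (numPatterns α β r * (t - 1) + 1)
    (fun _ => univ) (fun _ => ∅) (fun _ => by rw [card_univ, Fintype.card_fin])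
    (fun _ => ⟨by simp, by simp⟩) (fun _ _ hy => absurd hy (notMem_empty _))
  obtain ⟨q, -, hq⟩ : ∃ q ∈ univ, t - 1 < #(X q) := by
    refine exists_lt_of_sum_lt ?_
    simp only [sum_const, card_univ, smul_eq_mul, card_empty] at hsum ⊢
    rw [← numPatterns]
    omega
  exact (hX q).hasMonoCanonCopy (card_pos.1 (by omega)) (by omega)

end Bounds

/-- Souza's theorem: if `G →ᵣ H` with `r ≥ 2`, then there is a constant
`c = c(G, H, r)` such that `B(G →ᵣ H; t) ≤ cᵗ` for every `t`. -/
theorem souza_exponential_bound (pG pH : ℕ) (G : SimpleGraph (Fin pG))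
    (H : SimpleGraph (Fin pH)) (r : ℕ) (hr : 2 ≤ r) (hGH : Arrows G H r) :
    ∃ c : ℕ, ∀ t : ℕ, blowupRamsey G H r t ≤ c ^ t := by
  rcases isEmpty_or_nonempty (Fin pH) with hβ | hβ
  · exact ⟨1, fun t => by simpa using hGH.blowupRamsey_le_one (.inr hβ)⟩
  obtain ⟨c, hc⟩ : ∃ c, ∀ t, 0 < t → blowupRamsey G H r t ≤ c ^ t :=
    ⟨_, fun _ ht => hGH.blowupRamsey_le_pow (by omega) ht⟩
  refine ⟨c, fun t => ?_⟩
  rcases t.eq_zero_or_pos with rfl | ht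
  · simpa using hGH.blowupRamsey_le_one (.inl zero_le_one)
  · exact hc t ht
end

section
/- For every ε > 0 and every t ∈ ℕ, there exists n(ε, t) ∈ ℕ such that for every n ≥ n(ε, t), every 2-colouring of the edges of the complete graph K_n in which each of the two colours appears on at least ε·(n choose 2) edges contains a (2,t)-unavoidable coloured K_{2t}. -/
/-- `ContainsUnavoidablePair t n c` : the `2`-edge-coloured complete graph on
`Fin n` with colouring `c` contains a `(2,t)`-unavoidable coloured `K_{2t}`:
two disjoint `t`-sets `A`, `B`, with all edges inside `A` of colour `k₁`, all
edges inside `B` of colour `k₂`, all edges between `A` and `B` of colour `k₃`,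
and not all of `k₁, k₂, k₃` equal (this is exactly a `t`-blowup of a
`2`-minimal graph, equivalently one of the colours induces on `A ∪ B` either a
clique on `t` vertices or two vertex-disjoint cliques on `t` vertices). -/
def ContainsUnavoidablePair (t n : ℕ) (c : Sym2 (Fin n) → Fin 2) : Prop :=
  ∃ (A B : Finset (Fin n)) (k₁ k₂ k₃ : Fin 2),
    Disjoint A B ∧ A.card = t ∧ B.card = t ∧ ¬(k₁ = k₂ ∧ k₂ = k₃) ∧
    (∀ a ∈ A, ∀ b ∈ A, a ≠ b → c s(a, b) = k₁) ∧
    (∀ a ∈ B, ∀ b ∈ B, a ≠ b → c s(a, b) = k₂) ∧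
    (∀ a ∈ A, ∀ b ∈ B, c s(a, b) = k₃)

/-!
Fix `m` so large that the Kővári–Sós–Turán theorem finds a monochromatic `K_{t,t}` between any
two `m`-sets joined by at least `δ m²` pairs of one colour. It then suffices to find two disjoint
monochromatic `m`-cliques with a dense colour between them, not all three colours equal. If both
colours have `(m+1)`-cliques, take one of each. Otherwise some colour `j` has none, so by Ramsey
every large set contains an `m`-clique of the other colour `k`; a greedy packing of such cliques
covers almost every vertex, and as no `j`-edge lies inside a clique, the `ε (n choose 2)` edges of
colour `j` force two cliques with many `j`-edges between them.
-/

open Finset Filter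

universe u

section CompleteBipartite

variable {α β : Type*}

def ContainsCompleteBipartite (r : α → β → Prop) (t : ℕ) (X : Finset α) (Y : Finset β) : Prop :=
  ∃ A ⊆ X, ∃ B ⊆ Y, #A = t ∧ #B = t ∧ ∀ a ∈ A, ∀ b ∈ B, r a b

variable {r : α → β → Prop} {t : ℕ} {X : Finset α} {Y : Finset β}

lemma ContainsCompleteBipartite.mono {X' : Finset α} {Y' : Finset β} (hX : X ⊆ X') (hY : Y ⊆ Y') :
    ContainsCompleteBipartite r t X Y → ContainsCompleteBipartite r t X' Y'
  | ⟨A, hA, B, hB, h⟩ => ⟨A, hA.trans hX, B, hB.trans hY, h⟩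

/-- Double counting pairs `(b, S)` with `S` a `t`-subset of the neighbourhood of `b`. -/
lemma card_mul_choose_le_of_not_containsCompleteBipartite [DecidableRel r] {d : ℕ}
    (hr : ¬ContainsCompleteBipartite r t X Y) (hd : ∀ b ∈ Y, d ≤ #{a ∈ X | r a b}) :
    #Y * d.choose t ≤ (#X).choose t * (t - 1) := by
  classical
  rw [← card_powersetCard]
  refine card_mul_le_card_mul (fun b S => ∀ a ∈ S, r a b) (fun b hb => ?_) (fun S hS => ?_)
  · calc d.choose t ≤ (#{a ∈ X | r a b}).choose t := Nat.choose_le_choose t (hd b hb)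
      _ = #(powersetCard t {a ∈ X | r a b}) := (card_powersetCard _ _).symm
      _ ≤ _ := card_le_card fun S hS => ?_
    obtain ⟨hSX, hSt⟩ := mem_powersetCard.1 hS
    refine mem_filter.2 ⟨mem_powersetCard.2 ⟨hSX.trans (filter_subset _ _), hSt⟩, fun a ha => ?_⟩
    exact (mem_filter.1 (hSX ha)).2
  · obtain ⟨hSX, hSt⟩ := mem_powersetCard.1 hS
    by_contra! h
    obtain ⟨B, hB, hBt⟩ :=
      exists_subset_card_eq (show t ≤ #(bipartiteBelow (fun b S => ∀ a ∈ S, r a b) Y S) by omega)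
    exact hr ⟨S, hSX, B, fun b hb => (mem_filter.1 (hB hb)).1, hSt, hBt,
      fun a ha b hb => (mem_filter.1 (hB hb)).2 a ha⟩

lemma card_filter_product_le [DecidableRel r] {θ : ℝ} (hθ : 0 ≤ θ) :
    (#{p ∈ X ×ˢ Y | r p.1 p.2} : ℝ) ≤ #{b ∈ Y | θ ≤ #{a ∈ X | r a b}} * #X + #Y * θ := by
  have hsum : #{p ∈ X ×ˢ Y | r p.1 p.2} = ∑ b ∈ Y, #{a ∈ X | r a b} := by
    simp only [card_filter, sum_product_right]
  rw [hsum, Nat.cast_sum, ← sum_filter_add_sum_filter_not Y (fun b => θ ≤ #{a ∈ X | r a b})]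
  gcongr
  · calc _ ≤ ∑ _b ∈ {b ∈ Y | θ ≤ #{a ∈ X | r a b}}, (#X : ℝ) :=
          sum_le_sum fun b _ => by exact_mod_cast card_filter_le _ _
      _ = _ := by rw [sum_const, nsmul_eq_mul]
  · calc _ ≤ ∑ _b ∈ {b ∈ Y | ¬θ ≤ #{a ∈ X | r a b}}, θ :=
          sum_le_sum fun b hb => (not_le.1 (mem_filter.1 hb).2).le
      _ ≤ #Y * θ := by
          rw [sum_const, nsmul_eq_mul]
          gcongr
          exact filter_subset _ _

lemma div_two_pow_div_factorial_le_choose {d : ℕ} {x : ℝ} (hx : 2 * t ≤ x) (hd : x ≤ d) :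
    (x / 2) ^ t / t.factorial ≤ d.choose t := by
  have htd : t ≤ d := by exact_mod_cast (by linarith : (t : ℝ) ≤ d)
  refine le_trans ?_ (Nat.pow_le_choose t d)
  gcongr
  · linarith
  · rw [Nat.cast_sub (by omega)]
    push_cast
    linarith

/-- The Kővári–Sós–Turán theorem, with an explicit threshold on `m`. -/
theorem containsCompleteBipartite_of_dense [DecidableRel r] {m : ℕ} {δ : ℝ} (hδ : 0 < δ)
    (hX : #X = m) (hY : #Y = m) (hm : 4 * t ≤ δ * m) (hm' : t < δ / 2 * (δ / 4) ^ t * m)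
    (hdense : δ * m ^ 2 ≤ #{p ∈ X ×ˢ Y | r p.1 p.2}) : ContainsCompleteBipartite r t X Y := by
  by_contra hr
  set θ := δ * m / 2 with hθ
  set H := {b ∈ Y | θ ≤ #{a ∈ X | r a b}}
  have hm₀ : (0 : ℝ) < m :=
    pos_of_mul_pos_right ((Nat.cast_nonneg t).trans_lt hm') (by positivity)
  have hH : θ ≤ #H := by
    have h := card_filter_product_le (r := r) (X := X) (Y := Y) (by positivity : 0 ≤ θ)
    rw [hX, hY] at h
    nlinarith
  have hcount : (#H * (⌈θ⌉₊).choose t : ℝ) ≤ m.choose t * (t - 1 : ℕ) := by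
    rw [← hX]
    exact_mod_cast card_mul_choose_le_of_not_containsCompleteBipartite
      (fun h => hr (h.mono subset_rfl (filter_subset _ _)))
      fun b hb => Nat.ceil_le.2 (mem_filter.1 hb).2
  have hfact : (0 : ℝ) < t.factorial := by exact_mod_cast t.factorial_pos
  have hbound : θ * (θ / 2) ^ t ≤ m ^ t * t := by
    calc θ * (θ / 2) ^ t = θ * ((θ / 2) ^ t / t.factorial) * t.factorial := by field_simp
      _ ≤ #H * (⌈θ⌉₊).choose t * t.factorial := by
          gcongr
          exact div_two_pow_div_factorial_le_choose (by linarith) (Nat.le_ceil θ)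
      _ ≤ m.choose t * (t - 1 : ℕ) * t.factorial := by gcongr
      _ ≤ m ^ t / t.factorial * t * t.factorial := by
          gcongr
          · exact Nat.choose_le_pow_div t m
          · exact_mod_cast Nat.sub_le t 1
      _ = m ^ t * t := by field_simp
  have : δ / 2 * (δ / 4) ^ t * m * m ^ t ≤ t * m ^ t := by
    calc δ / 2 * (δ / 4) ^ t * m * m ^ t = θ * (θ / 2) ^ t := by rw [hθ]; ring
      _ ≤ t * m ^ t := by linarith
  exact (le_of_mul_le_mul_right this (by positivity)).not_gt hm'

theorem eventually_containsCompleteBipartite (t : ℕ) {δ : ℝ} (hδ : 0 < δ) :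
    ∀ᶠ m : ℕ in atTop, ∀ {α β : Type u} (r : α → β → Prop) [DecidableRel r] (X : Finset α)
      (Y : Finset β), #X = m → #Y = m → δ * m ^ 2 ≤ #{p ∈ X ×ˢ Y | r p.1 p.2} →
        ContainsCompleteBipartite r t X Y := by
  have hlin {c : ℝ} (hc : 0 < c) := tendsto_natCast_atTop_atTop.const_mul_atTop hc
  filter_upwards [(hlin hδ).eventually_ge_atTop (4 * t : ℝ),
    (hlin (by positivity : 0 < δ / 2 * (δ / 4) ^ t)).eventually_gt_atTop (t : ℝ)]
    with m hm hm' α β r _ X Y hX hY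
  exact containsCompleteBipartite_of_dense hδ hX hY hm hm'

end CompleteBipartite

section Colourings

variable {V : Type*} [DecidableEq V]

lemma insert_subset_pairwise_of_subset_filter (p : Sym2 V → Prop) [DecidablePred p] {v : V}
    {M S : Finset V} (hv : v ∈ S) (hMS : M ⊆ {x ∈ S.erase v | p s(v, x)})
    (hM : (M : Set V).Pairwise fun x y => p s(x, y)) :
    insert v M ⊆ S ∧ #(insert v M) = #M + 1 ∧
      (↑(insert v M) : Set V).Pairwise fun x y => p s(x, y) := by
  have hmem {x} (hx : x ∈ M) := mem_filter.1 (hMS hx)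
  refine ⟨insert_subset hv fun x hx => mem_of_mem_erase (hmem hx).1,
    card_insert_of_notMem fun hvM => notMem_erase v S (hmem hvM).1, ?_⟩
  rw [coe_insert]
  exact hM.insert fun x hx _ => ⟨(hmem hx).2, Sym2.eq_swap ▸ (hmem hx).2⟩

/-- Ramsey's theorem for two colours; the bound comes from
`R(a+1, b+1) ≤ R(a, b+1) + R(a+1, b)`. -/
theorem exists_pairwise_or_pairwise_not (p : Sym2 V → Prop) [DecidablePred p] (a b : ℕ)
    (S : Finset V) (hS : (a + b).choose a ≤ #S) :
    (∃ M ⊆ S, #M = a ∧ (M : Set V).Pairwise fun x y => p s(x, y)) ∨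
      ∃ M ⊆ S, #M = b ∧ (M : Set V).Pairwise fun x y => ¬p s(x, y) := by
  induction a generalizing b S with
  | zero => exact .inl ⟨∅, empty_subset _, rfl, by simp⟩
  | succ a iha =>
  induction b generalizing S with
  | zero => exact .inr ⟨∅, empty_subset _, rfl, by simp⟩
  | succ b ihb =>
  obtain ⟨v, hv⟩ : S.Nonempty := card_pos.1 ((Nat.choose_pos (by omega)).trans_le hS)
  have hsplit := card_filter_add_card_filter_not (s := S.erase v) (fun x => p s(v, x))
  rw [card_erase_of_mem hv] at hsplit
  have hchoose : (a + 1 + (b + 1)).choose (a + 1) =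
      (a + (b + 1)).choose a + (a + 1 + b).choose (a + 1) := by
    rw [show a + 1 + (b + 1) = (a + 1 + b) + 1 by omega, Nat.choose_succ_succ,
      show a + 1 + b = a + (b + 1) by omega]
  by_cases hN : (a + (b + 1)).choose a ≤ #{x ∈ S.erase v | p s(v, x)}
  · rcases iha (b + 1) _ hN with ⟨M, hMS, hM, hMp⟩ | ⟨M, hMS, hM, hMp⟩
    · obtain ⟨hsub, hcard, hpair⟩ := insert_subset_pairwise_of_subset_filter p hv hMS hMp
      exact .inl ⟨_, hsub, hcard.trans (by rw [hM]), hpair⟩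
    · exact .inr ⟨M, hMS.trans ((filter_subset _ _).trans (erase_subset _ _)), hM, hMp⟩
  · rcases ihb {x ∈ S.erase v | ¬p s(v, x)} (by omega) with ⟨M, hMS, hM, hMp⟩ | ⟨M, hMS, hM, hMp⟩
    · exact .inl ⟨M, hMS.trans ((filter_subset _ _).trans (erase_subset _ _)), hM, hMp⟩
    · obtain ⟨hsub, hcard, hpair⟩ :=
        insert_subset_pairwise_of_subset_filter (fun e => ¬p e) hv hMS hMp
      exact .inr ⟨_, hsub, hcard.trans (by rw [hM]), hpair⟩

end Colourings

section Packing

variable {V : Type*} [DecidableEq V]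

/-- Greedy packing: keep removing a nonempty `P`-set while at least `R` elements remain. -/
theorem exists_pairwiseDisjoint_card_sdiff_biUnion_lt (P : Finset V → Prop) {R : ℕ}
    (hP : ∀ S : Finset V, R ≤ #S → ∃ D ⊆ S, D.Nonempty ∧ P D) (U : Finset V) :
    ∃ 𝒟 : Finset (Finset V), (∀ D ∈ 𝒟, D ⊆ U ∧ P D) ∧
      (𝒟 : Set (Finset V)).PairwiseDisjoint id ∧ #(U \ 𝒟.biUnion id) < R := by
  induction U using Finset.strongInduction with
  | H U ih =>
  by_cases hU : R ≤ #U
  · obtain ⟨D, hDU, hD, hPD⟩ := hP U hU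
    obtain ⟨𝒟, h𝒟, hdisj, hrest⟩ := ih (U \ D) (sdiff_ssubset hDU hD)
    refine ⟨insert D 𝒟, ?_, ?_, ?_⟩
    · simp only [mem_insert, forall_eq_or_imp]
      exact ⟨⟨hDU, hPD⟩, fun D' hD' => ⟨(h𝒟 D' hD').1.trans sdiff_subset, (h𝒟 D' hD').2⟩⟩
    · rw [coe_insert]
      exact hdisj.insert fun D' hD' _ => disjoint_of_subset_right (h𝒟 D' hD').1 disjoint_sdiff
    · rwa [biUnion_insert, id, sdiff_union_distrib, ← Finset.sdiff_sdiff_left']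
  · exact ⟨∅, by simp, by simp, by simpa using hU⟩

/-- Every ordered `r`-pair either meets the uncovered part or joins two different blocks. -/
theorem card_filter_offDiag_le [Fintype V] (r : V → V → Prop) [DecidableRel r]
    (𝒟 : Finset (Finset V)) (h𝒟 : ∀ D ∈ 𝒟, (D : Set V).Pairwise fun x y => ¬r x y) :
    #{p ∈ (univ : Finset V).offDiag | r p.1 p.2} ≤
      2 * #(univ \ 𝒟.biUnion id) * Fintype.card V +
        ∑ E ∈ 𝒟.offDiag, #{p ∈ E.1 ×ˢ E.2 | r p.1 p.2} := by
  set L := univ \ 𝒟.biUnion id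
  have hsub : {p ∈ (univ : Finset V).offDiag | r p.1 p.2} ⊆
      (L ×ˢ univ ∪ univ ×ˢ L) ∪ 𝒟.offDiag.biUnion fun E => {p ∈ E.1 ×ˢ E.2 | r p.1 p.2} := by
    rintro ⟨x, y⟩ hxy
    simp only [mem_filter, mem_offDiag, mem_univ, true_and] at hxy
    by_cases hx : x ∈ L
    · simp [hx]
    by_cases hy : y ∈ L
    · simp [hy]
    obtain ⟨D, hD, hxD⟩ : ∃ D ∈ 𝒟, x ∈ D := by simpa [L] using hx
    obtain ⟨D', hD', hyD'⟩ : ∃ D' ∈ 𝒟, y ∈ D' := by simpa [L] using hy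
    have hDD' : D ≠ D' := by
      rintro rfl
      exact h𝒟 D hD hxD hyD' hxy.1 hxy.2
    refine mem_union_right _ (mem_biUnion.2 ⟨(D, D'), mem_offDiag.2 ⟨hD, hD', hDD'⟩, ?_⟩)
    exact mem_filter.2 ⟨mem_product.2 ⟨hxD, hyD'⟩, hxy.2⟩
  calc _ ≤ _ := card_le_card hsub
    _ ≤ #(L ×ˢ univ) + #(univ ×ˢ L) + ∑ E ∈ 𝒟.offDiag, #{p ∈ E.1 ×ˢ E.2 | r p.1 p.2} :=
        (card_union_le _ _).trans (add_le_add (card_union_le _ _) card_biUnion_le)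
    _ = _ := by
        rw [card_product, card_product, card_univ]
        ring

end Packing

section DenseCliquePair

variable {V κ : Type*}

theorem ncard_le_card_filter_offDiag [Fintype V] [DecidableEq V] (P : Sym2 V → Prop)
    [DecidablePred P] :
    {e : Sym2 V | ¬e.IsDiag ∧ P e}.ncard ≤ #{p ∈ (univ : Finset V).offDiag | P s(p.1, p.2)} := by
  set F : Finset (V × V) := {p ∈ univ.offDiag | P s(p.1, p.2)}
  have hsub :
      {e : Sym2 V | ¬e.IsDiag ∧ P e} ⊆ (fun p : V × V => s(p.1, p.2)) '' (F : Set (V × V)) := by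
    rintro e ⟨he, hP⟩
    induction e using Sym2.ind with
    | _ x y => exact ⟨(x, y), by simpa [F] using ⟨he, hP⟩, rfl⟩
  calc {e : Sym2 V | ¬e.IsDiag ∧ P e}.ncard
      ≤ ((fun p : V × V => s(p.1, p.2)) '' (F : Set (V × V))).ncard := Set.ncard_le_ncard hsub
    _ ≤ (F : Set (V × V)).ncard := Set.ncard_image_le (Set.toFinite _)
    _ = #F := Set.ncard_coe_finset F

def HasDenseCliquePair [DecidableEq κ] (c : Sym2 V → κ) (m : ℕ) (δ : ℝ) : Prop :=
  ∃ (D D' : Finset V) (k₁ k₂ k₃ : κ), Disjoint D D' ∧ #D = m ∧ #D' = m ∧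
    ¬(k₁ = k₂ ∧ k₂ = k₃) ∧ (D : Set V).Pairwise (fun x y => c s(x, y) = k₁) ∧
    (D' : Set V).Pairwise (fun x y => c s(x, y) = k₂) ∧
    δ * m ^ 2 ≤ #{p ∈ D ×ˢ D' | c s(p.1, p.2) = k₃}

variable [DecidableEq κ] {c : Sym2 V → κ} {m : ℕ}

lemma HasDenseCliquePair.mono {δ δ' : ℝ} (h : HasDenseCliquePair c m δ) (hδ : δ' ≤ δ) :
    HasDenseCliquePair c m δ' :=
  let ⟨D, D', k₁, k₂, k₃, hDD', hD, hD', hk, hD₁, hD'₂, hdense⟩ := h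
  ⟨D, D', k₁, k₂, k₃, hDD', hD, hD', hk, hD₁, hD'₂, by nlinarith [sq_nonneg (m : ℝ)]⟩

/-- Two large cliques of different colours overlap in at most one vertex; the majority colour
between them is dense. -/
theorem hasDenseCliquePair_of_cliques [DecidableEq V] {c : Sym2 V → Fin 2} {j j' : Fin 2}
    (hjj' : j ≠ j') {X Y : Finset V} (hX : #X = m + 1) (hY : #Y = m + 1)
    (hXj : (X : Set V).Pairwise fun x y => c s(x, y) = j)
    (hYj' : (Y : Set V).Pairwise fun x y => c s(x, y) = j') :
    HasDenseCliquePair c m (1 / 2) := by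
  have hXY : #(X ∩ Y) ≤ 1 := card_le_one.2 fun x hx y hy => by
    by_contra hxy
    rw [mem_inter] at hx hy
    exact hjj' ((hXj hx.1 hy.1 hxy).symm.trans (hYj' hx.2 hy.2 hxy))
  obtain ⟨D, hD, hDm⟩ := exists_subset_card_eq
    (show m ≤ #(X \ Y) by have := card_sdiff_add_card_inter X Y; omega)
  obtain ⟨D', hD', hD'm⟩ := exists_subset_card_eq (show m ≤ #Y by omega)
  obtain ⟨k₃, -, hk₃⟩ := exists_le_card_fiber_of_nsmul_le_card_of_maps_to
    (s := D ×ˢ D') (f := fun p => c s(p.1, p.2)) (b := (1 / 2 : ℝ) * m ^ 2)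
    (fun _ _ => mem_univ _) univ_nonempty (by simp [card_product, hDm, hD'm]; ring_nf; rfl)
  refine ⟨D, D', j, j', k₃,
    disjoint_of_subset_left hD (disjoint_of_subset_right hD' sdiff_disjoint),
    hDm, hD'm, fun h => hjj' h.1, hXj.mono (coe_subset.2 (hD.trans sdiff_subset)),
    hYj'.mono (coe_subset.2 hD'), hk₃⟩

theorem hasDenseCliquePair_of_forall_exists_pairwise [Fintype V] [DecidableEq V] {j k : κ}
    (hjk : j ≠ k) {R : ℕ} {ε : ℝ} (hε : 0 < ε) (hm : 0 < m)
    (hR : ∀ S : Finset V, R ≤ #S → ∃ D ⊆ S, #D = m ∧ (D : Set V).Pairwise fun x y => c s(x, y) = k)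
    (hn : 8 * R / ε + 2 < Fintype.card V)
    (hj : ε * (Fintype.card V).choose 2 ≤ #{p ∈ (univ : Finset V).offDiag | c s(p.1, p.2) = j}) :
    HasDenseCliquePair c m (ε / 4) := by
  obtain ⟨𝒟, h𝒟, hdisj, hL⟩ := exists_pairwiseDisjoint_card_sdiff_biUnion_lt
    (fun D : Finset V => #D = m ∧ (D : Set V).Pairwise fun x y => c s(x, y) = k) (fun S hS => by
      obtain ⟨D, hDS, hD⟩ := hR S hS
      exact ⟨D, hDS, card_pos.1 (hD.1 ▸ hm), hD⟩) univ
  suffices ∃ E ∈ 𝒟.offDiag, ε / 4 * m ^ 2 ≤ #{p ∈ E.1 ×ˢ E.2 | c s(p.1, p.2) = j} by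
    obtain ⟨⟨D, D'⟩, hE, hdense⟩ := this
    obtain ⟨hD, hD', hDD'⟩ := mem_offDiag.1 hE
    exact ⟨D, D', k, k, j, hdisj hD hD' hDD', (h𝒟 D hD).2.1, (h𝒟 D' hD').2.1,
      fun h => hjk h.2.symm, (h𝒟 D hD).2.2, (h𝒟 D' hD').2.2, hdense⟩
  by_contra! hsparse
  set n := Fintype.card V
  have hcount := card_filter_offDiag_le (fun x y => c s(x, y) = j) 𝒟 fun D hD =>
    (h𝒟 D hD).2.2.imp fun x y hck hcj => hjk (hcj.symm.trans hck)
  have hq : #𝒟 * m ≤ n := by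
    calc #𝒟 * m = #(𝒟.biUnion id) := by
          rw [card_biUnion hdisj]
          exact (sum_const_nat fun D hD => (h𝒟 D hD).2.1).symm
      _ ≤ n := card_le_univ _
  have hcross : (∑ E ∈ 𝒟.offDiag, #{p ∈ E.1 ×ˢ E.2 | c s(p.1, p.2) = j} : ℝ) ≤ ε / 4 * n ^ 2 := by
    calc _ ≤ #𝒟.offDiag * (ε / 4 * m ^ 2) := by
          rw [← nsmul_eq_mul]
          exact sum_le_card_nsmul _ _ _ fun E hE => (hsparse E hE).le
      _ ≤ (#𝒟 * #𝒟 : ℕ) * (ε / 4 * m ^ 2) := by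
          gcongr
          rw [offDiag_card]
          exact Nat.sub_le _ _
      _ = ε / 4 * (#𝒟 * m : ℕ) ^ 2 := by push_cast; ring
      _ ≤ ε / 4 * n ^ 2 := by gcongr
  have hLR : (#(univ \ 𝒟.biUnion id) : ℝ) ≤ R := by exact_mod_cast hL.le
  have hcountR : (#{p ∈ (univ : Finset V).offDiag | c s(p.1, p.2) = j} : ℝ) ≤
      2 * R * n + ε / 4 * n ^ 2 := by
    have hsplit : (#{p ∈ (univ : Finset V).offDiag | c s(p.1, p.2) = j} : ℝ) ≤
        2 * #(univ \ 𝒟.biUnion id) * n +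
          ∑ E ∈ 𝒟.offDiag, (#{p ∈ E.1 ×ˢ E.2 | c s(p.1, p.2) = j} : ℝ) := by
      exact_mod_cast hcount
    have hLn := mul_le_mul_of_nonneg_right hLR n.cast_nonneg
    linarith
  rw [Nat.cast_choose_two] at hj
  have h8R : 8 * R < ε * (n - 2) := by
    rw [div_add' _ _ _ hε.ne', div_lt_iff₀ hε] at hn
    linarith
  nlinarith

theorem hasDenseCliquePair_of_le_ncard [Fintype V] [DecidableEq V] {c : Sym2 V → Fin 2} {ε : ℝ}
    (hε : 0 < ε) (hm : 0 < m) (hn : 8 * (m + 1 + m).choose (m + 1) / ε + 2 < Fintype.card V)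
    (hc : ∀ k, ε * (Fintype.card V).choose 2 ≤ {e : Sym2 V | ¬e.IsDiag ∧ c e = k}.ncard) :
    HasDenseCliquePair c m (min (1 / 2) (ε / 4)) := by
  by_cases hcliques : ∀ k : Fin 2, ∃ M : Finset V, #M = m + 1 ∧
      (M : Set V).Pairwise fun x y => c s(x, y) = k
  · obtain ⟨X, hX, hX0⟩ := hcliques 0
    obtain ⟨Y, hY, hY1⟩ := hcliques 1
    exact (hasDenseCliquePair_of_cliques zero_ne_one hX hY hX0 hY1).mono (min_le_left _ _)
  push Not at hcliques
  obtain ⟨j, hj⟩ := hcliques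
  obtain ⟨k, hjk⟩ : ∃ k, j ≠ k := ⟨j + 1, by omega⟩
  refine (hasDenseCliquePair_of_forall_exists_pairwise hjk hε hm (fun S hS => ?_) hn
    ((hc j).trans (by exact_mod_cast ncard_le_card_filter_offDiag _))).mono (min_le_right _ _)
  rcases exists_pairwise_or_pairwise_not (c · = j) (m + 1) m S hS with
    ⟨M, -, hM, hMj⟩ | ⟨M, hMS, hM, hMk⟩
  · exact absurd hMj (hj M hM)
  · exact ⟨M, hMS, hM, hMk.imp fun x y h => by omega⟩

end DenseCliquePair

/-- The Cutler–Montágh theorem: for every `ε > 0` and `t` there is `n(ε, t)`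
such that for every `n ≥ n(ε, t)`, every `2`-colouring of the edges of `K_n`
in which each colour appears on at least `ε·(n choose 2)` edges contains a
`(2,t)`-unavoidable coloured `K_{2t}`. -/
theorem cutler_montagh (ε : ℝ) (hε : 0 < ε) (t : ℕ) :
    ∃ n₀ : ℕ, ∀ n : ℕ, n₀ ≤ n →
      ∀ c : Sym2 (Fin n) → Fin 2,
        (∀ k : Fin 2,
          ε * (n.choose 2 : ℝ) ≤
            ({e : Sym2 (Fin n) | ¬ e.IsDiag ∧ c e = k}.ncard : ℝ)) →
        ContainsUnavoidablePair t n c := by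
  obtain ⟨m, hm, hKST⟩ := ((eventually_gt_atTop 0).and
    (eventually_containsCompleteBipartite t (by positivity : 0 < min (1 / 2 : ℝ) (ε / 4)))).exists
  obtain ⟨n₀, hn₀⟩ := exists_nat_gt (8 * (m + 1 + m).choose (m + 1) / ε + 2)
  refine ⟨n₀, fun n hn c hc => ?_⟩
  obtain ⟨D, D', k₁, k₂, k₃, hDD', hD, hD', hk, hD₁, hD'₂, hdense⟩ :=
    hasDenseCliquePair_of_le_ncard (c := c) hε hm (by simpa using hn₀.trans_le (Nat.cast_le.2 hn))
      (by simpa using hc)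
  obtain ⟨A, hA, B, hB, hAt, hBt, hAB⟩ := hKST (fun a b => c s(a, b) = k₃) D D' hD hD' hdense
  exact ⟨A, B, k₁, k₂, k₃, hDD'.mono hA hB, hAt, hBt, hk, hD₁.mono (coe_subset.2 hA),
    hD'₂.mono (coe_subset.2 hB), hAB⟩
end
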